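/- arXiv:2203.07704 — 6 statements merged into one kernel-verified Lean document; each statement's English description precedes it below -/
import Mathlib

section
/- Let G be a graph and ℋ=(L,H) a full m-fold cover of G. For any connected subgraph G₀ of G, the number of transversals of {L(v): v ∈ V(G₀)} inducing a copy of G₀ in H is at most m, with equality if every non-bridge edge of G₀ is horizontal with respect to ℋ. -/
open SimpleGraph

attribute [local instance] Classical.propDecidable

universe u
variable {V : Type u}

/-- `H` (on vertex set `V × Fin m`) is an `m`-fold cover of `G`. -/
def IsCover (G : SimpleGraph V) (m : ℕ) (H : SimpleGraph (V × Fin m)) : Prop :=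
  (∀ (u : V) (i j : Fin m), i ≠ j → H.Adj (u, i) (u, j)) ∧
  (∀ (u v : V) (i j : Fin m), u ≠ v → H.Adj (u, i) (v, j) → G.Adj u v) ∧
  (∀ (u v : V) (i j j' : Fin m), u ≠ v → H.Adj (u, i) (v, j) → H.Adj (u, i) (v, j') → j = j')

/-- A full cover: every matching between fibers over an edge is perfect. -/
def IsFullCover (G : SimpleGraph V) (m : ℕ) (H : SimpleGraph (V × Fin m)) : Prop :=
  IsCover G m H ∧ ∀ u v : V, G.Adj u v → ∀ i : Fin m, ∃ j : Fin m, H.Adj (u, i) (v, j)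

/-- Number of ℋ-colorings (independent transversals) of a cover graph `H`. -/
noncomputable def coverCount {m : ℕ} (H : SimpleGraph (V × Fin m)) : ℕ :=
  Nat.card {f : V → Fin m // ∀ u v : V, ¬ H.Adj (u, f u) (v, f v)}

/-- The DP color function. -/
noncomputable def PDP (G : SimpleGraph V) (m : ℕ) : ℕ :=
  sInf {n | ∃ H : SimpleGraph (V × Fin m), IsCover G m H ∧ n = coverCount H}

/-- Number of proper m-colorings, i.e. the chromatic polynomial evaluated at m. -/
noncomputable def properCount (G : SimpleGraph V) (m : ℕ) : ℕ :=
  Nat.card {f : V → Fin m // ∀ u v : V, G.Adj u v → f u ≠ f v}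

/-- Girth of an edge: length of a shortest cycle through `e` (∞ if none). -/
noncomputable def edgeGirth (G : SimpleGraph V) (e : Sym2 V) : ℕ∞ :=
  ⨅ (a : V) (p : G.Walk a a) (_ : p.IsCycle) (_ : e ∈ p.edges), (p.length : ℕ∞)

/-- Girth of an edge set `E₀`: length of a shortest cycle meeting `E₀` in an odd
number of edges (∞ if none). -/
noncomputable def setGirth (G : SimpleGraph V) (E₀ : Set (Sym2 V)) : ℕ∞ :=
  ⨅ (a : V) (p : G.Walk a a) (_ : p.IsCycle)
    (_ : Odd (p.edges.countP (fun e => e ∈ E₀))), (p.length : ℕ∞)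

/-- The canonical cover graph `H_{G,m}`. -/
def canonicalCover (G : SimpleGraph V) (m : ℕ) : SimpleGraph (V × Fin m) where
  Adj x y := (x.1 = y.1 ∧ x.2 ≠ y.2) ∨ (G.Adj x.1 y.1 ∧ x.2 = y.2)
  symm := by
    constructor
    rintro ⟨u, i⟩ ⟨v, j⟩ (⟨h1, h2⟩ | ⟨h1, h2⟩)
    · exact Or.inl ⟨h1.symm, h2.symm⟩
    · exact Or.inr ⟨h1.symm, h2.symm⟩
  loopless := by constructor; rintro ⟨u, i⟩ (⟨h1, h2⟩ | ⟨h1, h2⟩) <;> simp_all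

/-- `D` is an orientation of the edge set `E₀`. -/
def IsOrientation (D : Set (V × V)) (E₀ : Set (Sym2 V)) : Prop :=
  (∀ x ∈ D, s(x.1, x.2) ∈ E₀) ∧
  ∀ u v : V, s(u, v) ∈ E₀ → ((u, v) ∈ D ↔ (v, u) ∉ D)

/-- The directed edges `D` are balanced on the closed walk `p`. -/
noncomputable def BalancedOn {G : SimpleGraph V} (D : Set (V × V)) {a : V}
    (p : G.Walk a a) : Prop :=
  p.darts.countP (fun d => (d.fst, d.snd) ∈ D) =
    p.darts.countP (fun d => (d.snd, d.fst) ∈ D)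

/-- A DP-good graph. -/
def DPGood [Fintype V] (G : SimpleGraph V) : Prop :=
  G.Connected ∧
  ∃ T : SimpleGraph V, T ≤ G ∧ T.IsTree ∧
    ∃ (q : ℕ) (e : Fin q → Sym2 V),
      Function.Injective e ∧
      Set.range e = G.edgeSet \ T.edgeSet ∧
      (∀ i j : Fin q, i ≤ j → edgeGirth G (e i) ≤ edgeGirth G (e j)) ∧
      ∀ i : Fin q, ∃ g : ℕ, Odd g ∧ edgeGirth G (e i) = (g : ℕ∞) ∧
        ∃ (a : V) (C : G.Walk a a), C.IsCycle ∧ e i ∈ C.edges ∧ C.length = g ∧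
          ∀ f ∈ C.edges, f ∈ T.edgeSet ∪ {e j | j ≤ i}


/-- An edge `uv` of `G` is horizontal with respect to the cover `H`. -/
def IsHorizontal {V : Type} {m : ℕ} (H : SimpleGraph (V × Fin m)) (u v : V) : Prop :=
  ∀ i j : Fin m, H.Adj (u, i) (v, j) ↔ i = j

/-!
Over every edge a full cover is a perfect matching between the two fibres, so a copy of the
connected graph `G₀` is determined by the colour it takes at one vertex: propagate it along
walks. This gives at most `m` copies. Conversely, every colour `i` at a base vertex `v₀` extends
to a copy once the non-bridge edges are horizontal. Induct on the edges: if no bridge lies in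
the component of `v₀`, all its edges are horizontal and the constant transversal `i` works;
otherwise delete a bridge `ab`, lift from `(v₀, i)` on the side of `a` and from the colour
matched to that of `a` on the side of `b`, and glue the two lifts across `ab`.
-/

namespace SimpleGraph

variable {α β : Type*} {W : SimpleGraph α} {R : α → α → β → β → Prop}

theorem Reachable.reachable_deleteEdges_or {a b x y : α} (h : W.Reachable x y) :
    (W.deleteEdges {s(a, b)}).Reachable x y ∨ (W.deleteEdges {s(a, b)}).Reachable a y ∨
      (W.deleteEdges {s(a, b)}).Reachable b y := by
  obtain ⟨p⟩ := h
  induction p with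
  | nil => exact Or.inl .rfl
  | @cons x c y hxc p ih =>
    by_cases hab : s(x, c) = s(a, b)
    · rcases Sym2.eq_iff.mp hab with ⟨-, rfl⟩ | ⟨-, rfl⟩ <;> tauto
    · have hxc' : (W.deleteEdges {s(a, b)}).Adj x c := by simp [hxc, hab]
      exact ih.imp_left hxc'.reachable.trans

theorem Preconnected.eq_of_rel_of_apply_eq (hW : W.Preconnected)
    (hR : ∀ u v, W.Adj u v → ∀ i j j', R u v i j → R u v i j' → j = j') {f g : α → β}
    (hf : ∀ u v, W.Adj u v → R u v (f u) (f v)) (hg : ∀ u v, W.Adj u v → R u v (g u) (g v))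
    {x : α} (hx : f x = g x) : f = g := by
  funext y
  obtain ⟨p⟩ := hW x y
  induction p with
  | nil => exact hx
  | @cons u v w huv p ih => exact ih (hR u v huv _ _ _ (hf u v huv) (hx ▸ hg u v huv))

theorem rel_piecewise_of_isBridge (hsymm : ∀ u v i j, R u v i j → R v u j i) {a b v₀ : α}
    (hab : W.Adj a b) (hbridge : W.IsBridge s(a, b))
    (hv₀a : (W.deleteEdges {s(a, b)}).Reachable v₀ a) {f₁ f₂ : α → β}
    (hf₁ : ∀ u v, (W.deleteEdges {s(a, b)}).Adj u v →
      (W.deleteEdges {s(a, b)}).Reachable v₀ u → R u v (f₁ u) (f₁ v))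
    (hf₂ : ∀ u v, (W.deleteEdges {s(a, b)}).Adj u v →
      (W.deleteEdges {s(a, b)}).Reachable b u → R u v (f₂ u) (f₂ v))
    (hf₁₂ : R a b (f₁ a) (f₂ b)) (u v : α) (huv : W.Adj u v) (hu : W.Reachable v₀ u) :
    R u v (if (W.deleteEdges {s(a, b)}).Reachable v₀ u then f₁ u else f₂ u)
      (if (W.deleteEdges {s(a, b)}).Reachable v₀ v then f₁ v else f₂ v) := by
  set W' := W.deleteEdges {s(a, b)}
  have hv₀b : ¬ W'.Reachable v₀ b := fun h => isBridge_iff.mp hbridge (hv₀a.symm.trans h)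
  by_cases he : s(u, v) = s(a, b)
  · rcases Sym2.eq_iff.mp he with ⟨rfl, rfl⟩ | ⟨rfl, rfl⟩
    · simpa [hv₀a, hv₀b] using hf₁₂
    · simpa [hv₀a, hv₀b] using hsymm _ _ _ _ hf₁₂
  have huv' : W'.Adj u v := by simp [W', huv, he]
  by_cases hv₀u : W'.Reachable v₀ u
  · simpa [hv₀u, hv₀u.trans huv'.reachable] using hf₁ u v huv' hv₀u
  have hv₀v : ¬ W'.Reachable v₀ v := fun h => hv₀u (h.trans huv'.symm.reachable)
  have hbu : W'.Reachable b u := by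
    rcases hu.reachable_deleteEdges_or (a := a) (b := b) with h | h | h
    · exact absurd h hv₀u
    · exact absurd (hv₀a.trans h) hv₀u
    · exact h
  simpa [hv₀u, hv₀v] using hf₂ u v huv' hbu

theorem exists_rel_lift [Finite α] (W : SimpleGraph α)
    (hsymm : ∀ u v i j, R u v i j → R v u j i)
    (htotal : ∀ u v, W.Adj u v → ∀ i, ∃ j, R u v i j)
    (hhoriz : ∀ u v, W.Adj u v → ¬ W.IsBridge s(u, v) → ∀ i j, R u v i j ↔ i = j)
    (v₀ : α) (i : β) :
    ∃ f : α → β, f v₀ = i ∧ ∀ u v, W.Adj u v → W.Reachable v₀ u → R u v (f u) (f v) := by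
  induction W using WellFoundedLT.induction generalizing v₀ i with
  | ind W ih =>
    by_cases hbridge :
        ∃ a b, W.Adj a b ∧ W.IsBridge s(a, b) ∧ (W.deleteEdges {s(a, b)}).Reachable v₀ a
    swap
    · refine ⟨fun _ => i, rfl, fun u v huv hu =>
        (hhoriz u v huv (fun huv_bridge => ?_) i i).mpr rfl⟩
      rcases hu.symm.reachable_deleteEdges_or (a := u) (b := v) with h | h | h
      iterate 2 exact hbridge ⟨u, v, huv, huv_bridge, h.symm⟩
      exact hbridge ⟨v, u, huv.symm, Sym2.eq_swap ▸ huv_bridge, Sym2.eq_swap ▸ h.symm⟩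
    obtain ⟨a, b, hab, hab_bridge, hv₀a⟩ := hbridge
    set W' := W.deleteEdges {s(a, b)}
    have hW' : W' < W := (deleteEdges_le _).lt_of_ne fun h => by
      have := h ▸ hab
      simp at this
    have hsub : ∀ {u v}, W'.Adj u v → W.Adj u v := fun h => deleteEdges_le _ h
    have htotal' : ∀ u v, W'.Adj u v → ∀ i, ∃ j, R u v i j := fun u v h => htotal u v (hsub h)
    have hhoriz' : ∀ u v, W'.Adj u v → ¬ W'.IsBridge s(u, v) → ∀ i j, R u v i j ↔ i = j :=
      fun u v h hnb => hhoriz u v (hsub h) (mt (IsBridge.anti (deleteEdges_le _)) hnb)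
    obtain ⟨f₁, hf₁v₀, hf₁⟩ := ih W' hW' htotal' hhoriz' v₀ i
    obtain ⟨j, hj⟩ := htotal a b hab (f₁ a)
    obtain ⟨f₂, hf₂b, hf₂⟩ := ih W' hW' htotal' hhoriz' b j
    exact ⟨fun x => if W'.Reachable v₀ x then f₁ x else f₂ x, by simp [hf₁v₀],
      rel_piecewise_of_isBridge hsymm hab hab_bridge hv₀a hf₁ hf₂ (hf₂b ▸ hj)⟩

end SimpleGraph

theorem card_copies_le_m_general {V : Type} [Fintype V]
    (G : SimpleGraph V) (m : ℕ) (H : SimpleGraph (V × Fin m))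
    (hH : IsFullCover G m H) (G' : G.Subgraph) (hconn : G'.Connected) :
    Nat.card {f : G'.verts → Fin m // ∀ u v : G'.verts,
        G'.Adj u.1 v.1 → H.Adj (u.1, f u) (v.1, f v)} ≤ m ∧
    ((∀ u v : G'.verts, G'.coe.Adj u v → ¬ G'.coe.IsBridge s(u, v) →
        IsHorizontal H u.1 v.1) →
      Nat.card {f : G'.verts → Fin m // ∀ u v : G'.verts,
        G'.Adj u.1 v.1 → H.Adj (u.1, f u) (v.1, f v)} = m) := by
  obtain ⟨⟨-, -, hunique⟩, htotal⟩ := hH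
  obtain ⟨v₀, hv₀⟩ := hconn.nonempty
  let eval (f : {f : G'.verts → Fin m // ∀ u v : G'.verts,
      G'.Adj u.1 v.1 → H.Adj (u.1, f u) (v.1, f v)}) : Fin m := f.1 ⟨v₀, hv₀⟩
  have heval_inj : Function.Injective eval := fun f g hfg =>
    Subtype.ext <| hconn.coe.preconnected.eq_of_rel_of_apply_eq
      (R := fun (u v : G'.verts) (i j : Fin m) => H.Adj (u.1, i) (v.1, j))
      (fun u v huv i j j' => hunique u.1 v.1 i j j' (G'.adj_sub huv).ne) f.2 g.2 hfg
  refine ⟨by simpa using Nat.card_le_card_of_injective eval heval_inj, fun hhoriz => ?_⟩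
  have heval_surj : Function.Surjective eval := fun i => by
    obtain ⟨f, hfv₀, hf⟩ := G'.coe.exists_rel_lift (fun u v i j h => h.symm)
      (fun u v huv => htotal u.1 v.1 (G'.adj_sub huv)) hhoriz ⟨v₀, hv₀⟩ i
    exact ⟨⟨f, fun u v huv => hf u v huv (hconn.coe.preconnected _ _)⟩, hfv₀⟩
  simpa using Nat.card_eq_of_bijective eval ⟨heval_inj, heval_surj⟩

/-- for a connected subgraph `G₀` of `G`, the number of transversals
inducing a copy of `G₀` is at most `m`, with equality if every non-bridge edge of `G₀`
is horizontal. -/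
theorem card_copies_le_m {V : Type} [Fintype V] [DecidableEq V]
    (G : SimpleGraph V) (m : ℕ) (H : SimpleGraph (V × Fin m))
    (hH : IsFullCover G m H) (G' : G.Subgraph) (hconn : G'.Connected) :
    Nat.card {f : G'.verts → Fin m // ∀ u v : G'.verts,
        G'.Adj u.1 v.1 → H.Adj (u.1, f u) (v.1, f v)} ≤ m ∧
    ((∀ u v : G'.verts, G'.coe.Adj u v → ¬ G'.coe.IsBridge s(u, v) →
        IsHorizontal H u.1 v.1) →
      Nat.card {f : G'.verts → Fin m // ∀ u v : G'.verts,
        G'.Adj u.1 v.1 → H.Adj (u.1, f u) (v.1, f v)} = m) :=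
  card_copies_le_m_general G m H hH G' hconn
end

section
/- Every complete multipartite graph with at least three partite sets is DP-good. -/
open SimpleGraph

attribute [local instance] Classical.propDecidable

universe u
variable {V : Type u}

/-!
Fix parts `i₀ ≠ i₁` with vertices `r ∈ i₀`, `s ∈ i₁`, and take as spanning tree the double star
joining `r` to every vertex outside part `i₀` and `s` to every vertex of part `i₀`. Since there is
a third part, every edge lies in a triangle, so every edge girth is `3`. List the non-tree edges
in three blocks: edges avoiding part `i₀`, edges from `i₀` to a part other than `i₁`, and edges
from `i₀` to `i₁`. An edge `uv` of the first block closes the triangle `uvr` with two tree edges;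
one of the second block (with `u ∈ i₀`) closes `uvs`, where `us` is a tree edge and `vs` is in the
first block; one of the third block closes `uvw` with `w` in a third part, where `vw` is in the first
block and `uw` in the second.
-/

lemma Finset.exists_monotone_enumeration {α : Type*} (S : Finset α) (rk : α → ℕ) :
    ∃ (q : ℕ) (e : Fin q → α), Function.Injective e ∧ Set.range e = S ∧ Monotone (rk ∘ e) := by
  set l := S.toList.mergeSort fun a b => decide (rk a ≤ rk b)
  have hperm : l.Perm S.toList := List.mergeSort_perm _ _
  have hsorted : l.Pairwise fun a b => decide (rk a ≤ rk b) :=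
    List.pairwise_mergeSort (fun a b c hab hbc => by simp_all; omega)
      (fun a b => by simpa using le_total _ _) _
  refine ⟨l.length, l.get, List.nodup_iff_injective_get.mp (hperm.nodup_iff.mpr S.nodup_toList),
    ?_, fun i j hij => ?_⟩
  · ext x
    simp [hperm.mem_iff]
  · rcases hij.lt_or_eq with hlt | rfl
    · simpa using hsorted.rel_get_of_lt hlt
    · rfl

def Sym2.weightSum {α M : Type*} [AddCommMagma M] (φ : α → M) : Sym2 α → M :=
  Sym2.lift ⟨fun a b => φ a + φ b, fun _ _ => add_comm _ _⟩

@[simp]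
lemma Sym2.weightSum_mk {α M : Type*} [AddCommMagma M] (φ : α → M) (a b : α) :
    Sym2.weightSum φ s(a, b) = φ a + φ b :=
  rfl

namespace SimpleGraph

variable {G : SimpleGraph V}

lemma exists_isCycle_of_triangle {u v w : V} (huv : G.Adj u v) (hvw : G.Adj v w)
    (hwu : G.Adj w u) :
    ∃ C : G.Walk u u, C.IsCycle ∧ C.length = 3 ∧ C.edges = [s(u, v), s(v, w), s(w, u)] := by
  refine ⟨.cons huv (.cons hvw (.cons hwu .nil)), ?_, rfl, rfl⟩
  simp [Walk.cons_isCycle_iff, huv.ne, hvw.ne, hwu.ne, huv.ne', hwu.ne']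

lemma edgeGirth_eq_three {e : Sym2 V} {a : V} {C : G.Walk a a} (hC : C.IsCycle)
    (hlen : C.length = 3) (he : e ∈ C.edges) : edgeGirth G e = 3 := by
  refine le_antisymm ?_ (le_iInf₂ fun _ p => le_iInf₂ fun hp _ => ?_)
  · refine iInf_le_of_le a <| iInf_le_of_le C ?_
    simp [hC, he, hlen]
  · exact_mod_cast hp.three_le_length

lemma isAcyclic_of_subsingleton_neighborSet {r s : V}
    (h : ∀ x, x ≠ r → x ≠ s → (G.neighborSet x).Subsingleton) : G.IsAcyclic := by
  intro a c hc
  -- `a`, `c.snd` and `c.penultimate` are three distinct vertices of `c`, so one avoids `r` and `s`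
  have hne : a ≠ c.snd ∧ a ≠ c.penultimate ∧ c.snd ≠ c.penultimate :=
    ⟨(c.adj_snd hc.not_nil).ne, (c.adj_penultimate hc.not_nil).ne', hc.snd_ne_penultimate⟩
  obtain ⟨x, hx, hxr, hxs⟩ : ∃ x ∈ c.support, x ≠ r ∧ x ≠ s := by
    by_contra! hrs
    have ha := hrs a c.start_mem_support
    have hb := hrs c.snd (c.getVert_mem_support 1)
    have hp := hrs c.penultimate (c.getVert_mem_support _)
    generalize c.snd = b, c.penultimate = p at hne hb hp
    grind +splitImp
  have hc' := hc.rotate hx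
  exact hc'.snd_ne_penultimate <| h x hxr hxs ((c.rotate x hx).adj_snd hc'.not_nil)
    ((c.rotate x hx).adj_penultimate hc'.not_nil).symm

def doubleStar (A : Set V) (r s : V) : SimpleGraph V :=
  fromRel fun x y => (x = r ∧ y ∉ A) ∨ (x = s ∧ y ∈ A)

section doubleStar

variable {A : Set V} {r s : V}

lemma doubleStar_adj_left (hr : r ∈ A) {x : V} (hx : x ∉ A) : (doubleStar A r s).Adj r x :=
  (fromRel_adj _ _ _).mpr ⟨by rintro rfl; exact hx hr, .inl (.inl ⟨rfl, hx⟩)⟩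

lemma doubleStar_adj_right (hs : s ∉ A) {x : V} (hx : x ∈ A) : (doubleStar A r s).Adj s x :=
  (fromRel_adj _ _ _).mpr ⟨by rintro rfl; exact hs hx, .inl (.inr ⟨rfl, hx⟩)⟩

lemma doubleStar_connected (hr : r ∈ A) (hs : s ∉ A) : (doubleStar A r s).Connected := by
  refine (connected_iff_exists_forall_reachable _).mpr ⟨r, fun x => ?_⟩
  by_cases hx : x ∈ A
  · exact (doubleStar_adj_left hr hs).reachable.trans (doubleStar_adj_right hs hx).reachable
  · exact (doubleStar_adj_left hr hx).reachable

lemma doubleStar_isAcyclic : (doubleStar A r s).IsAcyclic :=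
  isAcyclic_of_subsingleton_neighborSet (r := r) (s := s) fun x hxr hxs y hy z hz => by
    simp only [mem_neighborSet, doubleStar, fromRel_adj] at hy hz
    grind

lemma doubleStar_isTree (hr : r ∈ A) (hs : s ∉ A) : (doubleStar A r s).IsTree :=
  ⟨doubleStar_connected hr hs, doubleStar_isAcyclic⟩

lemma doubleStar_le (hr : ∀ x ∉ A, G.Adj r x) (hs : ∀ x ∈ A, G.Adj s x) :
    doubleStar A r s ≤ G := by
  intro x y hxy
  simp only [doubleStar, fromRel_adj] at hxy
  obtain ⟨-, (⟨rfl, hy⟩ | ⟨rfl, hy⟩) | (⟨rfl, hx⟩ | ⟨rfl, hx⟩)⟩ := hxy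
  exacts [hr y hy, hs y hy, (hr x hx).symm, (hs x hx).symm]

end doubleStar

def IsLowerTriangle (G T : SimpleGraph V) (rk : Sym2 V → ℕ) (u v w : V) : Prop :=
  G.Adj u w ∧ G.Adj v w ∧ (s(u, w) ∈ T.edgeSet ∨ rk s(u, w) < rk s(u, v)) ∧
    (s(v, w) ∈ T.edgeSet ∨ rk s(v, w) < rk s(u, v))

lemma IsLowerTriangle.swap {T : SimpleGraph V} {rk : Sym2 V → ℕ} {u v w : V}
    (h : IsLowerTriangle G T rk u v w) : IsLowerTriangle G T rk v u w := by
  obtain ⟨huw, hvw, huwT, hvwT⟩ := h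
  rw [Sym2.eq_swap (a := u) (b := v)] at huwT hvwT
  exact ⟨hvw, huw, hvwT, huwT⟩

theorem dpGood_of_forall_isLowerTriangle [Fintype V] {T : SimpleGraph V} (hT : T.IsTree)
    (hTG : T ≤ G) (rk : Sym2 V → ℕ)
    (htri : ∀ u v, G.Adj u v → s(u, v) ∉ T.edgeSet → ∃ w, IsLowerTriangle G T rk u v w) :
    DPGood G := by
  have htriangle : ∀ f ∈ G.edgeSet \ T.edgeSet, ∃ (a : V) (C : G.Walk a a), C.IsCycle ∧
      C.length = 3 ∧ f ∈ C.edges ∧ ∀ f' ∈ C.edges, f' = f ∨ f' ∈ T.edgeSet ∨ rk f' < rk f := by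
    rintro f ⟨hfG, hfT⟩
    induction f using Sym2.ind with
    | _ u v =>
      obtain ⟨w, huw, hvw, huwT, hvwT⟩ := htri u v hfG hfT
      obtain ⟨C, hC, hlen, hedges⟩ := exists_isCycle_of_triangle hfG hvw huw.symm
      rw [Sym2.eq_swap (a := w)] at hedges
      refine ⟨u, C, hC, hlen, by simp [hedges], ?_⟩
      simp only [hedges, List.mem_cons, List.not_mem_nil, or_false]
      rintro f' (rfl | rfl | rfl) <;> tauto
  obtain ⟨q, e, he_inj, he_range, he_mono⟩ :=
    (G.edgeSet \ T.edgeSet).toFinite.toFinset.exists_monotone_enumeration rk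
  rw [Set.Finite.coe_toFinset] at he_range
  have he_mem : ∀ i, e i ∈ G.edgeSet \ T.edgeSet := fun i => he_range ▸ Set.mem_range_self i
  have hgirth : ∀ i, edgeGirth G (e i) = 3 := fun i => by
    obtain ⟨a, C, hC, hlen, he, -⟩ := htriangle (e i) (he_mem i)
    exact edgeGirth_eq_three hC hlen he
  refine ⟨hT.connected.mono hTG, T, hTG, hT, q, e, he_inj, he_range,
    fun i j _ => (hgirth i).trans_le (hgirth j).ge, fun i => ?_⟩
  obtain ⟨a, C, hC, hlen, he, hC_edges⟩ := htriangle (e i) (he_mem i)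
  refine ⟨3, by decide, by simp [hgirth i], a, C, hC, he, hlen, fun f hf => ?_⟩
  rcases hC_edges f hf with rfl | hfT | hlt
  · exact .inr ⟨i, le_rfl, rfl⟩
  · exact .inl hfT
  by_cases hfT : f ∈ T.edgeSet
  · exact .inl hfT
  obtain ⟨j, rfl⟩ : f ∈ Set.range e := he_range ▸ ⟨C.edges_subset_edgeSet hf, hfT⟩
  exact .inr ⟨j, (he_mono.reflect_lt hlt).le, rfl⟩

section completeMultipartiteGraph

variable {ι : Type*} {W : ι → Type*} {i₀ i₁ k : ι}

-- The induced edge ranks are `≤ 1`, `2` and `3` on the three blocks of non-tree edges.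
noncomputable def partWeight (i₀ i₁ : ι) (x : Σ i, W i) : ℕ :=
  if x.1 = i₀ then 2 else if x.1 = i₁ then 1 else 0

def partDoubleStar (w₀ : W i₀) (w₁ : W i₁) : SimpleGraph (Σ i, W i) :=
  doubleStar {x | x.1 = i₀} ⟨i₀, w₀⟩ ⟨i₁, w₁⟩

lemma partDoubleStar_isTree (h01 : i₀ ≠ i₁) (w₀ : W i₀) (w₁ : W i₁) :
    (partDoubleStar w₀ w₁).IsTree :=
  doubleStar_isTree rfl h01.symm

lemma partDoubleStar_le (h01 : i₀ ≠ i₁) (w₀ : W i₀) (w₁ : W i₁) :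
    partDoubleStar w₀ w₁ ≤ completeMultipartiteGraph W :=
  doubleStar_le (fun _ hx => Ne.symm hx) fun _ hx => h01.symm.trans_eq hx.symm

lemma completeMultipartiteGraph_exists_isLowerTriangle_of_ne (h01 : i₀ ≠ i₁) (h0k : i₀ ≠ k)
    (h1k : i₁ ≠ k) (w₀ : W i₀) (w₁ : W i₁) (wk : W k) {u v : Σ i, W i} (hv : v.1 ≠ i₀) :
    ∃ w, IsLowerTriangle (completeMultipartiteGraph W) (partDoubleStar w₀ w₁)
      (Sym2.weightSum (partWeight i₀ i₁)) u v w := by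
  by_cases hu : u.1 = i₀
  · by_cases hv1 : v.1 = i₁
    · refine ⟨⟨k, wk⟩, hu.trans_ne h0k, hv1.trans_ne h1k, .inr ?_, .inr ?_⟩ <;>
        simp [partWeight, hu, hv1, h01.symm, h0k.symm, h1k.symm]
    · refine ⟨⟨i₁, w₁⟩, hu.trans_ne h01, hv1, .inl ?_, .inr ?_⟩
      · exact Adj.symm <| doubleStar_adj_right (A := {x : Σ i, W i | x.1 = i₀}) h01.symm hu
      · simp [partWeight, hu, hv, hv1, h01.symm]
  · have hr {x : Σ i, W i} (hx : x.1 ≠ i₀) : (partDoubleStar w₀ w₁).Adj x ⟨i₀, w₀⟩ :=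
      (doubleStar_adj_left (A := {x : Σ i, W i | x.1 = i₀}) rfl hx).symm
    exact ⟨⟨i₀, w₀⟩, hu, hv, .inl (hr hu), .inl (hr hv)⟩

lemma completeMultipartiteGraph_exists_isLowerTriangle (h01 : i₀ ≠ i₁) (h0k : i₀ ≠ k)
    (h1k : i₁ ≠ k) (w₀ : W i₀) (w₁ : W i₁) (wk : W k) {u v : Σ i, W i}
    (huv : (completeMultipartiteGraph W).Adj u v) :
    ∃ w, IsLowerTriangle (completeMultipartiteGraph W) (partDoubleStar w₀ w₁)
      (Sym2.weightSum (partWeight i₀ i₁)) u v w := by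
  by_cases hv : v.1 = i₀
  · obtain ⟨w, hw⟩ := completeMultipartiteGraph_exists_isLowerTriangle_of_ne h01 h0k h1k w₀ w₁ wk
      (u := v) (huv.trans_eq hv)
    exact ⟨w, hw.swap⟩
  · exact completeMultipartiteGraph_exists_isLowerTriangle_of_ne h01 h0k h1k w₀ w₁ wk hv

end completeMultipartiteGraph

end SimpleGraph

theorem dpGood_completeMultipartite_general (ι : Type) [Fintype ι]
    (W : ι → Type) [∀ i, Fintype (W i)]
    (h3 : 3 ≤ Fintype.card ι) (hne : ∀ i, Nonempty (W i)) :
    DPGood (SimpleGraph.completeMultipartiteGraph W) := by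
  obtain ⟨i₀, i₁, k, h01, h0k, h1k⟩ := Fintype.two_lt_card_iff.mp h3
  obtain ⟨w₀⟩ := hne i₀
  obtain ⟨w₁⟩ := hne i₁
  obtain ⟨wk⟩ := hne k
  exact dpGood_of_forall_isLowerTriangle (partDoubleStar_isTree h01 w₀ w₁)
    (partDoubleStar_le h01 w₀ w₁) _ fun _ _ huv _ =>
      completeMultipartiteGraph_exists_isLowerTriangle h01 h0k h1k w₀ w₁ wk huv

/-- every complete multipartite graph with at least three (nonempty)
partite sets is DP-good. -/
theorem dpGood_completeMultipartite (ι : Type) [Fintype ι] [DecidableEq ι]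
    (W : ι → Type) [∀ i, Fintype (W i)] [∀ i, DecidableEq (W i)]
    (h3 : 3 ≤ Fintype.card ι) (hne : ∀ i, Nonempty (W i)) :
    DPGood (SimpleGraph.completeMultipartiteGraph W) :=
  dpGood_completeMultipartite_general ι W h3 hne
end

section
/- Every chordal graph is DP-good. -/
open SimpleGraph

attribute [local instance] Classical.propDecidable

universe u
variable {V : Type u}

namespace DPAux

variable {V : Type} [Fintype V] [DecidableEq V]
set_option linter.unusedSectionVars false
set_option linter.unusedVariables false
set_option maxHeartbeats 1000000

/-- The chordality hypothesis. -/
def Chordal (G : SimpleGraph V) : Prop :=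
  ∀ (a : V) (p : G.Walk a a), p.IsCycle → 4 ≤ p.length →
    ∃ u v : V, u ∈ p.support ∧ v ∈ p.support ∧ G.Adj u v ∧ s(u, v) ∉ p.edges

lemma walk_len0 {G : SimpleGraph V} {c d : V} (w : G.Walk c d) (h : w.length = 0) : c = d := by
  cases w with
  | nil => rfl
  | cons h' w' => simp at h

lemma walk_len1_edges {G : SimpleGraph V} {c d : V} (w : G.Walk c d) (h : w.length = 1) :
    w.edges = [s(c, d)] := by
  cases w with
  | nil => simp at h
  | cons h' w' =>
    have h0 : w'.length = 0 := by simpa using h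
    have := walk_len0 w' h0
    subst this
    cases w' with
    | nil => simp
    | cons h'' w'' => simp at h0

lemma walk_len2 {G : SimpleGraph V} {c d : V} (w : G.Walk c d) (h : w.length = 2) :
    ∃ m, G.Adj c m ∧ G.Adj m d ∧ m ∈ w.support ∧ w.edges = [s(c, m), s(m, d)] := by
  cases w with
  | nil => simp at h
  | cons h' w' =>
    have h1 : w'.length = 1 := by simpa using h
    cases w' with
    | nil => simp at h1
    | cons h'' w'' =>
      have h0 : w''.length = 0 := by simpa using h1
      have := walk_len0 w'' h0
      subst this
      cases w'' with
      | nil => exact ⟨_, h', h'', by simp, by simp⟩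
      | cons h3 w3 => simp at h0

/-- Ordered decomposition of a walk at two support vertices. -/
lemma exists_order {G : SimpleGraph V} {x y : V} (P : G.Walk x y) :
    ∀ {c d : V}, c ∈ P.support → d ∈ P.support →
      (∃ (W1 : G.Walk x c) (W2 : G.Walk c y), P = W1.append W2 ∧ d ∈ W2.support) ∨
      (∃ (W1 : G.Walk x d) (W2 : G.Walk d y), P = W1.append W2 ∧ c ∈ W2.support) := by
  induction P with
  | nil =>
    intro c d hc hd
    rw [Walk.mem_support_nil_iff] at hc hd
    subst hc; subst hd
    exact Or.inl ⟨Walk.nil, Walk.nil, rfl, by simp⟩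
  | @cons a m b h P ih =>
    intro c d hc hd
    by_cases hca : c = a
    · subst hca
      exact Or.inl ⟨Walk.nil, Walk.cons h P, rfl, hd⟩
    · by_cases hda : d = a
      · subst hda
        exact Or.inr ⟨Walk.nil, Walk.cons h P, rfl, hc⟩
      · have hc' : c ∈ P.support := by
          rw [Walk.support_cons, List.mem_cons] at hc; tauto
        have hd' : d ∈ P.support := by
          rw [Walk.support_cons, List.mem_cons] at hd; tauto
        rcases ih hc' hd' with ⟨W1, W2, hP, hmem⟩ | ⟨W1, W2, hP, hmem⟩
        · exact Or.inl ⟨Walk.cons h W1, W2, by rw [Walk.cons_append, ← hP], hmem⟩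
        · exact Or.inr ⟨Walk.cons h W1, W2, by rw [Walk.cons_append, ← hP], hmem⟩

/-- Ordered shortcut lemma: on a geodesic, a chord is impossible. -/
lemma ol {G : SimpleGraph V} {x y c d : V} (W1 : G.Walk x c) (W2 : G.Walk c y)
    (hadj : G.Adj c d) (hd : d ∈ W2.support)
    (hdist : G.dist x y = W1.length + W2.length)
    (h2 : s(c, d) ∉ W2.edges) : False := by
  set W3 := W2.takeUntil d hd with hW3
  set W4 := W2.dropUntil d hd with hW4
  have hspec : W3.append W4 = W2 := W2.take_spec hd
  have hlen : W3.length + W4.length = W2.length := by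
    rw [← hspec, Walk.length_append]
  have hle : G.dist x y ≤ (W1.append (Walk.cons hadj W4)).length := SimpleGraph.dist_le _
  rw [Walk.length_append, Walk.length_cons] at hle
  have h3 : W3.length ≤ 1 := by omega
  have h3ne : W3.length ≠ 0 := fun h0 => hadj.ne (walk_len0 W3 h0)
  have h31 : W3.length = 1 := by omega
  have := walk_len1_edges W3 h31
  apply h2
  have : s(c, d) ∈ W3.edges := by rw [this]; simp
  rw [← hspec, Walk.edges_append]
  exact List.mem_append_left _ this

/-- No chords on geodesics. -/
lemma shortcut {G : SimpleGraph V} {x y : V} (P : G.Walk x y) (hP : P.length = G.dist x y)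
    {c d : V} (hc : c ∈ P.support) (hd : d ∈ P.support) (hadj : G.Adj c d)
    (hne : s(c, d) ∉ P.edges) : False := by
  rcases exists_order P hc hd with ⟨W1, W2, hPe, hmem⟩ | ⟨W1, W2, hPe, hmem⟩
  · refine ol W1 W2 hadj hmem ?_ ?_
    · rw [← hP, hPe, Walk.length_append]
    · intro hmem2
      exact hne (by rw [hPe, Walk.edges_append]; exact List.mem_append_right _ hmem2)
  · refine ol W1 W2 hadj.symm hmem ?_ ?_
    · rw [← hP, hPe, Walk.length_append]
    · intro hmem2
      rw [Sym2.eq_swap] at hmem2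
      exact hne (by rw [hPe, Walk.edges_append]; exact List.mem_append_right _ hmem2)


lemma mem_support_tail_closed {G : SimpleGraph V} {a : V} (p : G.Walk a a) (hp : p.IsCycle)
    {z : V} (hz : z ∈ p.support) : z ∈ p.support.tail := by
  cases p with
  | nil => exact absurd rfl (hp.ne_nil)
  | cons h p' =>
    rw [Walk.support_cons, List.mem_cons] at hz
    rw [Walk.support_cons, List.tail_cons]
    rcases hz with rfl | hz
    · exact p'.end_mem_support
    · exact hz

/-- Split a cycle at a chord into two internally disjoint paths. -/
lemma cycle_chord_split {G : SimpleGraph V} {a x y : V} (p : G.Walk a a) (hp : p.IsCycle)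
    (hx : x ∈ p.support) (hy : y ∈ p.support) (hxy : G.Adj x y) (hne : s(x, y) ∉ p.edges) :
    ∃ (r : G.Walk x y) (t : G.Walk y x),
      r.IsPath ∧ t.IsPath ∧ 2 ≤ r.length ∧ 2 ≤ t.length ∧ r.length + t.length = p.length ∧
      (∀ e, e ∈ p.edges ↔ e ∈ r.edges ∨ e ∈ t.edges) ∧
      (∀ z ∈ r.support, z ∈ p.support) ∧ (∀ z ∈ t.support, z ∈ p.support) ∧
      (∀ z, z ∈ r.support → z ∈ t.support → z = x ∨ z = y) := by
  classical
  set q : G.Walk x x := p.rotate x hx with hq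
  have hqc : q.IsCycle := hp.rotate hx
  have hqsupp : q.support.tail ~r p.support.tail := p.support_rotate x hx
  have hqedges : q.edges ~r p.edges := p.rotate_edges x hx
  have hyq : y ∈ q.support := by
    have h1 : y ∈ p.support.tail := mem_support_tail_closed p hp hy
    have h2 : y ∈ q.support.tail := hqsupp.mem_iff.mpr h1
    rw [q.support_eq_cons]
    exact List.mem_cons_of_mem _ h2
  have hqsub : ∀ z ∈ q.support, z ∈ p.support := by
    intro z hz
    rw [q.support_eq_cons, List.mem_cons] at hz
    rcases hz with rfl | hz
    · exact hx
    · have := hqsupp.mem_iff.mp hz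
      rw [p.support_eq_cons]
      exact List.mem_cons_of_mem _ this
  have hqe : ∀ e, e ∈ q.edges ↔ e ∈ p.edges := fun e => hqedges.mem_iff
  have hqlen : q.length = p.length := by
    rw [hq]
    unfold Walk.rotate
    rw [Walk.length_append]
    have := congrArg Walk.length (p.take_spec hx)
    rw [Walk.length_append] at this
    omega
  -- destructure q
  clear_value q
  clear hq
  cases q with
  | nil => exact absurd rfl hqc.ne_nil
  | @cons _ w _ hxw q'' =>
    rw [Walk.cons_isCycle_iff] at hqc
    obtain ⟨hq''path, hq''ne⟩ := hqc
    have hyx : y ≠ x := fun h => hxy.ne h.symm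
    have hyq'' : y ∈ q''.support := by
      rw [Walk.support_cons, List.mem_cons] at hyq
      tauto
    set r'' : G.Walk w y := q''.takeUntil y hyq'' with hr''
    set t : G.Walk y x := q''.dropUntil y hyq'' with ht
    have hspec : r''.append t = q'' := q''.take_spec hyq''
    have hr''path : r''.IsPath := hq''path.takeUntil hyq''
    have htpath : t.IsPath := hq''path.dropUntil hyq''
    have hnodup : q''.support.Nodup := hq''path.support_nodup
    have hsuppeq : q''.support = r''.support ++ t.support.tail := by
      rw [← hspec, Walk.support_append]
    -- x ∉ r''.support
    have hxr'' : x ∉ r''.support := by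
      intro hmem
      have hxt : x ∈ t.support.tail := by
        have : x ∈ t.support := t.end_mem_support
        rw [t.support_eq_cons, List.mem_cons] at this
        rcases this with h1 | h1
        · exact absurd h1.symm hyx
        · exact h1
      rw [hsuppeq] at hnodup
      exact (List.disjoint_of_nodup_append hnodup) hmem hxt
    set r : G.Walk x y := Walk.cons hxw r'' with hrdef
    have hrpath : r.IsPath := hr''path.cons hxr''
    have hlenq : q''.length + 1 = p.length := by
      rw [← hqlen]
      simp
    have hlensum : r''.length + t.length = q''.length := by
      rw [← hspec, Walk.length_append]
    have hedgesq : ∀ e, e ∈ q''.edges ↔ e ∈ r''.edges ∨ e ∈ t.edges := by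
      intro e
      rw [← hspec, Walk.edges_append, List.mem_append]
    have hqedges_cons : (Walk.cons hxw q'').edges = s(x, w) :: q''.edges := rfl
    have hiff : ∀ e, e ∈ p.edges ↔ e ∈ r.edges ∨ e ∈ t.edges := by
      intro e
      rw [← hqe e, hqedges_cons, hrdef, Walk.edges_cons, List.mem_cons, List.mem_cons,
        hedgesq e]
      tauto
    have hrlen2 : 2 ≤ r.length := by
      have h1 : r.length = r''.length + 1 := by simp [hrdef]
      by_contra hcon
      have h0 : r''.length = 0 := by omega
      have := walk_len0 r'' h0
      subst this
      apply hne
      rw [hiff]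
      left
      rw [hrdef, Walk.edges_cons]
      simp
    have htlen2 : 2 ≤ t.length := by
      by_contra hcon
      have h0 : t.length = 0 ∨ t.length = 1 := by omega
      rcases h0 with h0 | h0
      · exact hyx (walk_len0 t h0)
      · have := walk_len1_edges t h0
        apply hne
        rw [hiff]
        right
        rw [this, Sym2.eq_swap]
        simp
    refine ⟨r, t, hrpath, htpath, hrlen2, htlen2, ?_, hiff, ?_, ?_, ?_⟩
    · have : r.length = r''.length + 1 := by simp [hrdef]
      omega
    · intro z hz
      rw [hrdef, Walk.support_cons, List.mem_cons] at hz
      rcases hz with rfl | hz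
      · exact hx
      · apply hqsub
        rw [Walk.support_cons, List.mem_cons]
        right
        exact (q''.support_takeUntil_subset hyq'') hz
    · intro z hz
      apply hqsub
      rw [Walk.support_cons, List.mem_cons]
      right
      exact (q''.support_dropUntil_subset hyq'') hz
    · intro z hzr hzt
      rw [hrdef, Walk.support_cons, List.mem_cons] at hzr
      rcases hzr with rfl | hzr
      · exact Or.inl rfl
      · rw [t.support_eq_cons, List.mem_cons] at hzt
        rcases hzt with rfl | hzt
        · exact Or.inr rfl
        · exfalso
          rw [hsuppeq] at hnodup
          exact (List.disjoint_of_nodup_append hnodup) hzr hzt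


/-- A chordal graph containing a cycle contains a triangle. -/
lemma exists_triangle {G : SimpleGraph V} (hch : Chordal G)
    (hcyc : ∃ (a : V) (p : G.Walk a a), p.IsCycle) :
    ∃ u v w : V, G.Adj u v ∧ G.Adj v w ∧ G.Adj w u := by
  classical
  set s : Set ℕ := {n | ∃ (a : V) (p : G.Walk a a), p.IsCycle ∧ p.length = n} with hs
  have hsne : s.Nonempty := by
    obtain ⟨a, p, hp⟩ := hcyc
    exact ⟨p.length, a, p, hp, rfl⟩
  obtain ⟨a, p, hp, hlen⟩ := Nat.sInf_mem hsne
  by_cases h4 : 4 ≤ p.length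
  · exfalso
    obtain ⟨x, y, hx, hy, hxy, hne⟩ := hch a p hp h4
    obtain ⟨r, t, hr, ht, hr2, ht2, hsum, hiff, _, _, _⟩ :=
      cycle_chord_split p hp hx hy hxy hne
    have hC : (Walk.cons hxy t).IsCycle := by
      rw [Walk.cons_isCycle_iff]
      exact ⟨ht, fun hmem => hne ((hiff _).mpr (Or.inr hmem))⟩
    have hmem : (Walk.cons hxy t).length ∈ s := ⟨x, _, hC, rfl⟩
    have hlt : (Walk.cons hxy t).length < sInf s := by
      rw [← hlen]
      simp only [Walk.length_cons]
      omega
    exact absurd (Nat.sInf_le hmem) (by omega)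
  · have h3 : p.length = 3 := by
      have := hp.three_le_length
      omega
    clear hlen h4
    cases p with
    | nil => simp at h3
    | @cons _ b _ h1 p1 =>
      cases p1 with
      | nil => simp at h3
      | @cons _ c _ h2 p2 =>
        cases p2 with
        | nil => simp at h3
        | @cons _ d _ h3' p3 =>
          have : p3.length = 0 := by simpa using h3
          have := walk_len0 p3 this
          subst this
          exact ⟨_, _, _, h1, h2, h3'⟩

/-- Induced subgraph on a finset, as a graph on `V`. -/
def indG (G : SimpleGraph V) (s : Finset V) : SimpleGraph V where
  Adj a b := G.Adj a b ∧ a ∈ s ∧ b ∈ s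
  symm := ⟨fun a b h => ⟨h.1.symm, h.2.2, h.2.1⟩⟩
  loopless := ⟨fun a h => G.irrefl h.1⟩

lemma indG_le (G : SimpleGraph V) (s : Finset V) : indG G s ≤ G := fun _ _ h => h.1

lemma indG_support_mem {G : SimpleGraph V} {s : Finset V} :
    ∀ {c d : V} (p : (indG G s).Walk c d), c ∈ s → ∀ z ∈ p.support, z ∈ s := by
  intro c d p
  induction p with
  | nil => intro hc z hz; rw [Walk.mem_support_nil_iff] at hz; subst hz; exact hc
  | @cons u m v h p ih =>
    intro hc z hz
    rw [Walk.support_cons, List.mem_cons] at hz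
    rcases hz with rfl | hz
    · exact hc
    · exact ih h.2.2 z hz

/-- Transfer an induced walk to the ambient graph. -/
def indW {G : SimpleGraph V} {s : Finset V} {c d : V} (p : (indG G s).Walk c d) : G.Walk c d :=
  p.transfer G (fun e he => (edgeSet_mono (indG_le G s)) (p.edges_subset_edgeSet he))

@[simp] lemma indW_edges {G : SimpleGraph V} {s : Finset V} {c d : V}
    (p : (indG G s).Walk c d) : (indW p).edges = p.edges := Walk.edges_transfer _ _

@[simp] lemma indW_support {G : SimpleGraph V} {s : Finset V} {c d : V}
    (p : (indG G s).Walk c d) : (indW p).support = p.support := Walk.support_transfer _ _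

@[simp] lemma indW_length {G : SimpleGraph V} {s : Finset V} {c d : V}
    (p : (indG G s).Walk c d) : (indW p).length = p.length := Walk.length_transfer _ _

lemma indW_isCycle {G : SimpleGraph V} {s : Finset V} {c : V}
    (p : (indG G s).Walk c c) (hp : p.IsCycle) : (indW p).IsCycle := hp.transfer _

lemma indW_isPath {G : SimpleGraph V} {s : Finset V} {c d : V}
    (p : (indG G s).Walk c d) (hp : p.IsPath) : (indW p).IsPath := hp.transfer _

/-- Transfer a walk between induced subgraphs when the support fits. -/
def indW2 {G : SimpleGraph V} {s t : Finset V} {c d : V} (p : (indG G s).Walk c d)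
    (h : ∀ z ∈ p.support, z ∈ t) : (indG G t).Walk c d :=
  p.transfer (indG G t) (by
    intro e he
    induction e with
    | _ u v =>
      have hadj : (indG G s).Adj u v := p.adj_of_mem_edges he
      refine ⟨hadj.1, h u (p.fst_mem_support_of_mem_edges he),
        h v (p.snd_mem_support_of_mem_edges he)⟩)

@[simp] lemma indW2_support {G : SimpleGraph V} {s t : Finset V} {c d : V}
    (p : (indG G s).Walk c d) (h : ∀ z ∈ p.support, z ∈ t) :
    (indW2 p h).support = p.support := Walk.support_transfer _ _


/-- `S` separates `a` from `b` inside `s`. -/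
def Sep (G : SimpleGraph V) (s S : Finset V) (a b : V) : Prop :=
  S ⊆ s ∧ a ∉ S ∧ b ∉ S ∧ ∀ _ : (indG G (s \ S)).Walk a b, False

lemma sep_swap {G : SimpleGraph V} {s S : Finset V} {a b : V} (h : Sep G s S a b) :
    Sep G s S b a :=
  ⟨h.1, h.2.2.1, h.2.1, fun w => h.2.2.2 w.reverse⟩

lemma sep_exists {G : SimpleGraph V} {s : Finset V} {a b : V} (hab : a ≠ b)
    (hnadj : ¬G.Adj a b) : Sep G s (s \ {a, b}) a b := by
  refine ⟨Finset.sdiff_subset, by simp, by simp, ?_⟩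
  intro w
  cases w with
  | nil => exact hab rfl
  | cons h w' =>
    have hc := h.2.2
    simp only [Finset.mem_sdiff, Finset.mem_insert, Finset.mem_singleton, not_and, not_not] at hc
    rcases hc.2 hc.1 with rfl | rfl
    · exact h.1.ne rfl
    · exact hnadj h.1

/-- A vertex of a minimal separator has a neighbour on the `a`-side. -/
lemma sep_nbr {G : SimpleGraph V} {s S : Finset V} {a b x : V} (ha : a ∈ s)
    (hSep : Sep G s S a b) (hx : x ∈ S)
    (hw : Nonempty ((indG G (s \ S.erase x)).Walk a b)) :
    ∃ z, (z ∈ s \ S ∧ Nonempty ((indG G (s \ S)).Walk a z)) ∧ G.Adj z x := by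
  by_contra hno
  push_neg at hno
  obtain ⟨w⟩ := hw
  have haS : a ∈ s \ S := Finset.mem_sdiff.mpr ⟨ha, hSep.2.1⟩
  have aux : ∀ (n : ℕ) {c : V} (w : (indG G (s \ S.erase x)).Walk c b), w.length ≤ n →
      c ∈ s \ S → Nonempty ((indG G (s \ S)).Walk a c) → False := by
    intro n
    induction n with
    | zero =>
      intro c w hl hc hr
      have : c = b := walk_len0 w (Nat.le_zero.mp hl)
      subst this
      obtain ⟨wr⟩ := hr
      exact hSep.2.2.2 wr
    | succ n ih =>
      intro c w hl hc hr
      cases w with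
      | nil =>
        obtain ⟨wr⟩ := hr
        exact hSep.2.2.2 wr
      | @cons _ m _ h w' =>
        by_cases hmx : m = x
        · subst hmx
          exact (hno c ⟨hc, hr⟩) h.1
        · have hm : m ∈ s \ S := by
            have h22 := h.2.2
            rw [Finset.mem_sdiff] at h22 ⊢
            refine ⟨h22.1, fun hmS => h22.2 (Finset.mem_erase.mpr ⟨hmx, hmS⟩)⟩
          refine ih w' (by simp only [Walk.length_cons] at hl; omega) hm ?_
          obtain ⟨wr⟩ := hr
          exact ⟨wr.append (Walk.cons ⟨h.1, hc, hm⟩ Walk.nil)⟩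
  exact aux w.length w le_rfl haS ⟨Walk.nil⟩

/-- Shortest path on one side of a separator. -/
lemma side_path {G : SimpleGraph V} {s S A : Finset V} {a x y : V}
    (hAdef : ∀ z, z ∈ A ↔ z ∈ s \ S ∧ Nonempty ((indG G (s \ S)).Walk a z))
    (hne : x ≠ y) (hnadj : ¬G.Adj x y)
    (hzx : ∃ z ∈ A, G.Adj z x) (hzy : ∃ z ∈ A, G.Adj z y) :
    ∃ P : (indG G (A ∪ {x, y})).Walk x y,
      P.IsPath ∧ P.length = (indG G (A ∪ {x, y})).dist x y ∧ 2 ≤ P.length := by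
  classical
  obtain ⟨z1, hz1A, hz1x⟩ := hzx
  obtain ⟨z2, hz2A, hz2y⟩ := hzy
  set A' : Finset V := A ∪ {x, y} with hA'
  have hxA' : x ∈ A' := by simp [hA']
  have hyA' : y ∈ A' := by simp [hA']
  have hz1A' : z1 ∈ A' := by simp [hA', hz1A]
  have hz2A' : z2 ∈ A' := by simp [hA', hz2A]
  obtain ⟨w1⟩ := ((hAdef z1).mp hz1A).2
  obtain ⟨w2⟩ := ((hAdef z2).mp hz2A).2
  set W : (indG G (s \ S)).Walk z1 z2 := w1.reverse.append w2 with hW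
  have hWsupp : ∀ m ∈ W.support, m ∈ A := by
    intro m hm
    rw [hAdef]
    have hz1m : z1 ∈ s \ S := ((hAdef z1).mp hz1A).1
    refine ⟨indG_support_mem W hz1m m hm, ?_⟩
    exact ⟨w1.append (W.takeUntil m hm)⟩
  have hWA' : ∀ m ∈ W.support, m ∈ A' := fun m hm => by simp [hA', hWsupp m hm]
  set W' := indW2 W hWA' with hW'
  have adj1 : (indG G A').Adj x z1 := ⟨hz1x.symm, hxA', hz1A'⟩
  have adj2 : (indG G A').Adj z2 y := ⟨hz2y, hz2A', hyA'⟩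
  have hreach : (indG G A').Reachable x y :=
    ⟨Walk.cons adj1 (W'.append (Walk.cons adj2 Walk.nil))⟩
  obtain ⟨P, hPpath, hPlen⟩ := hreach.exists_path_of_dist
  refine ⟨P, hPpath, hPlen, ?_⟩
  by_contra hcon
  have h01 : P.length = 0 ∨ P.length = 1 := by omega
  rcases h01 with h0 | h1
  · exact hne (walk_len0 P h0)
  · have := walk_len1_edges P h1
    have hmem : s(x, y) ∈ P.edges := by rw [this]; simp
    exact hnadj (P.adj_of_mem_edges hmem).1

/-- Minimal separators are cliques (the key chordality argument). -/
lemma sep_clique {G : SimpleGraph V} (hch : Chordal G) {s S A B : Finset V} {a b : V}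
    (hAdef : ∀ z, z ∈ A ↔ z ∈ s \ S ∧ Nonempty ((indG G (s \ S)).Walk a z))
    (hBdef : ∀ z, z ∈ B ↔ z ∈ s \ S ∧ Nonempty ((indG G (s \ S)).Walk b z))
    (hAB : ∀ z, z ∈ A → z ∈ B → False)
    {x y : V} (hxS : x ∈ S) (hyS : y ∈ S) (hne : x ≠ y)
    (hzAx : ∃ z ∈ A, G.Adj z x) (hzAy : ∃ z ∈ A, G.Adj z y)
    (hzBx : ∃ z ∈ B, G.Adj z x) (hzBy : ∃ z ∈ B, G.Adj z y) :
    G.Adj x y := by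
  classical
  by_contra hnadj
  have crossAB : ∀ c d, c ∈ A → d ∈ B → G.Adj c d → False := by
    intro c d hcA hdB hcd
    obtain ⟨wa⟩ := ((hAdef c).mp hcA).2
    have hcs : c ∈ s \ S := ((hAdef c).mp hcA).1
    have hds : d ∈ s \ S := ((hBdef d).mp hdB).1
    have hdA : d ∈ A := (hAdef d).mpr ⟨hds, ⟨wa.append (Walk.cons ⟨hcd, hcs, hds⟩ Walk.nil)⟩⟩
    exact hAB d hdA hdB
  obtain ⟨PA, hPApath, hPAlen, hPA2⟩ := side_path hAdef hne hnadj hzAx hzAy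
  obtain ⟨PB, hPBpath, hPBlen, hPB2⟩ := side_path hBdef hne hnadj hzBx hzBy
  have hxA' : x ∈ A ∪ {x, y} := by simp
  have hxB' : x ∈ B ∪ {x, y} := by simp
  have hA'B' : ∀ m, m ∈ A ∪ {x, y} → m ∈ B ∪ {x, y} → m = x ∨ m = y := by
    intro m hmA hmB
    simp only [Finset.mem_union, Finset.mem_insert, Finset.mem_singleton] at hmA hmB
    rcases hmA with hmA | hmA
    · rcases hmB with hmB | hmB
      · exact absurd hmB (fun h => hAB m hmA h)
      · exact hmB
    · exact hmA
  have hsuppPA : ∀ z ∈ PA.support, z ∈ A ∪ {x, y} := indG_support_mem PA hxA'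
  have hsuppPB : ∀ z ∈ PB.support, z ∈ B ∪ {x, y} := indG_support_mem PB hxB'
  have hxPB : x ∈ PB.support := PB.start_mem_support
  have hyPB : y ∈ PB.support := PB.end_mem_support
  have hxPA : x ∈ PA.support := PA.start_mem_support
  have hyPA : y ∈ PA.support := PA.end_mem_support
  set C : G.Walk x x := (indW PA).append (indW PB).reverse with hC
  have hCedges : ∀ e, e ∈ C.edges ↔ e ∈ PA.edges ∨ e ∈ PB.edges := by
    intro e
    rw [hC, Walk.edges_append, Walk.edges_reverse, List.mem_append, List.mem_reverse,
      indW_edges, indW_edges]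
  have hCsupp : ∀ m ∈ C.support, m ∈ PA.support ∨ m ∈ PB.support := by
    intro m hm
    rw [hC, Walk.mem_support_append_iff] at hm
    rcases hm with hm | hm
    · left; rw [indW_support] at hm; exact hm
    · right
      rw [Walk.support_reverse, List.mem_reverse, indW_support] at hm
      exact hm
  have hClen : C.length = PA.length + PB.length := by
    rw [hC, Walk.length_append, Walk.length_reverse, indW_length, indW_length]
  have hCne4 : 4 ≤ C.length := by omega
  have hedgedisj : ∀ e, e ∈ PA.edges → e ∈ PB.edges → False := by
    intro e heA heB
    induction e with
    | _ u v =>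
      have h1 : u ∈ A ∪ {x, y} := hsuppPA u (PA.fst_mem_support_of_mem_edges heA)
      have h2 : u ∈ B ∪ {x, y} := hsuppPB u (PB.fst_mem_support_of_mem_edges heB)
      have h3 : v ∈ A ∪ {x, y} := hsuppPA v (PA.snd_mem_support_of_mem_edges heA)
      have h4 : v ∈ B ∪ {x, y} := hsuppPB v (PB.snd_mem_support_of_mem_edges heB)
      have hadjuv := PA.adj_of_mem_edges heA
      rcases hA'B' u h1 h2 with rfl | rfl <;> rcases hA'B' v h3 h4 with rfl | rfl
      · exact hadjuv.1.ne rfl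
      · exact hnadj hadjuv.1
      · exact hnadj hadjuv.1.symm
      · exact hadjuv.1.ne rfl
  have hCtrail : C.IsTrail := by
    rw [Walk.isTrail_def, hC, Walk.edges_append, Walk.edges_reverse]
    rw [List.nodup_append]
    refine ⟨by rw [indW_edges]; exact hPApath.isTrail.edges_nodup,
      by rw [List.nodup_reverse, indW_edges]; exact hPBpath.isTrail.edges_nodup, ?_⟩
    intro e he1 e' he2 hee
    subst hee
    rw [indW_edges] at he1
    rw [List.mem_reverse, indW_edges] at he2
    exact hedgedisj e he1 he2
  have hCnil : C ≠ Walk.nil := by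
    intro h
    rw [h] at hClen
    simp only [Walk.length_nil] at hClen
    omega
  have hCtail : C.support.tail.Nodup := by
    have hsupp_eq : C.support = (indW PA).support ++ ((indW PB).reverse).support.tail := by
      rw [hC, Walk.support_append]
    have hPArev : (indW PA).support = x :: (indW PA).support.tail :=
      Walk.support_eq_cons _
    have htail_eq : C.support.tail
        = (indW PA).support.tail ++ ((indW PB).reverse).support.tail := by
      rw [hsupp_eq, hPArev]
      simp
    rw [htail_eq]
    have h1 : ((indW PA).support).Nodup := by
      rw [indW_support]; exact hPApath.support_nodup
    have h2 : (((indW PB).reverse).support).Nodup := by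
      rw [Walk.support_reverse, List.nodup_reverse, indW_support]
      exact hPBpath.support_nodup
    have h2' : ((indW PB).reverse).support = y :: ((indW PB).reverse).support.tail :=
      Walk.support_eq_cons _
    rw [List.nodup_append]
    refine ⟨(List.nodup_cons.mp (hPArev ▸ h1)).2, (List.nodup_cons.mp (h2' ▸ h2)).2, ?_⟩
    intro m hm1 m' hm2 hmm
    subst hmm
    have hmx : m ≠ x := by
      intro h; subst h
      exact (List.nodup_cons.mp (hPArev ▸ h1)).1 hm1
    have hmy : m ≠ y := by
      intro h; subst h
      exact (List.nodup_cons.mp (h2' ▸ h2)).1 hm2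
    have hmA : m ∈ PA.support := by
      rw [← indW_support PA, hPArev]
      exact List.mem_cons_of_mem _ hm1
    have hmB : m ∈ PB.support := by
      have hmm : m ∈ ((indW PB).reverse).support := h2' ▸ List.mem_cons_of_mem _ hm2
      rw [Walk.support_reverse, List.mem_reverse, indW_support] at hmm
      exact hmm
    rcases hA'B' m (hsuppPA m hmA) (hsuppPB m hmB) with rfl | rfl
    · exact hmx rfl
    · exact hmy rfl
  have hCcycle : C.IsCycle := by
    rw [Walk.isCycle_def]
    exact ⟨hCtrail, hCnil, hCtail⟩
  obtain ⟨c, d, hcC, hdC, hcd, hcdE⟩ := hch x C hCcycle hCne4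
  have hnotA : s(c, d) ∉ PA.edges := fun h => hcdE ((hCedges _).mpr (Or.inl h))
  have hnotB : s(c, d) ∉ PB.edges := fun h => hcdE ((hCedges _).mpr (Or.inr h))
  have hshortA : c ∈ PA.support → d ∈ PA.support → False := by
    intro hc1 hd1
    exact shortcut PA hPAlen hc1 hd1 ⟨hcd, hsuppPA c hc1, hsuppPA d hd1⟩ hnotA
  have hshortB : c ∈ PB.support → d ∈ PB.support → False := by
    intro hc1 hd1
    exact shortcut PB hPBlen hc1 hd1 ⟨hcd, hsuppPB c hc1, hsuppPB d hd1⟩ hnotB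
  have hcross2 : ∀ c' d', c' ∈ PA.support → c' ∉ PB.support → d' ∈ PB.support →
      d' ∉ PA.support → G.Adj c' d' → False := by
    intro c' d' hc1 hc2 hd1 hd2 hadj
    have hcA : c' ∈ A := by
      have := hsuppPA c' hc1
      simp only [Finset.mem_union, Finset.mem_insert, Finset.mem_singleton] at this
      rcases this with h | h | h
      · exact h
      · exact absurd (h ▸ hxPB) hc2
      · exact absurd (h ▸ hyPB) hc2
    have hdB : d' ∈ B := by
      have := hsuppPB d' hd1
      simp only [Finset.mem_union, Finset.mem_insert, Finset.mem_singleton] at this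
      rcases this with h | h | h
      · exact h
      · exact absurd (h ▸ hxPA) hd2
      · exact absurd (h ▸ hyPA) hd2
    exact crossAB c' d' hcA hdB hadj
  rcases hCsupp c hcC with hcA | hcB <;> rcases hCsupp d hdC with hdA | hdB
  · exact hshortA hcA hdA
  · by_cases h1 : c ∈ PB.support
    · exact hshortB h1 hdB
    · by_cases h2 : d ∈ PA.support
      · exact hshortA hcA h2
      · exact hcross2 c d hcA h1 hdB h2 hcd
  · by_cases h1 : d ∈ PB.support
    · exact hshortB hcB h1
    · by_cases h2 : c ∈ PA.support
      · exact hshortA h2 hdA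
      · exact hcross2 d c hdA h1 hcB h2 hcd.symm
  · exact hshortB hcB hdB


/-- Dirac-type theorem: a simplicial vertex avoiding a given clique. -/
lemma dirac {G : SimpleGraph V} (hch : Chordal G) :
    ∀ (n : ℕ) (s : Finset V), s.card ≤ n → ∀ K : Finset V, K ⊆ s →
      (∀ x ∈ K, ∀ y ∈ K, x ≠ y → G.Adj x y) → (s \ K).Nonempty →
      ∃ v, v ∈ s ∧ v ∉ K ∧
        ∀ p q, p ∈ s → q ∈ s → G.Adj v p → G.Adj v q → p ≠ q → G.Adj p q := by
  intro n
  induction n with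
  | zero =>
    intro s hcard K _ _ hne
    obtain ⟨v, hv⟩ := hne
    have : s = ∅ := Finset.card_eq_zero.mp (Nat.le_zero.mp hcard)
    rw [this] at hv
    simp at hv
  | succ n ih =>
    intro s hcard K hKs hKcl hne
    by_cases hcomp : ∀ p ∈ s, ∀ q ∈ s, p ≠ q → G.Adj p q
    · obtain ⟨v, hv⟩ := hne
      rw [Finset.mem_sdiff] at hv
      exact ⟨v, hv.1, hv.2, fun p q hp hq _ _ hpq => hcomp p hp q hq hpq⟩
    · -- find a nonadjacent pair (a, b) with a ∉ K and K ∖ {b} adjacent to b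
      push_neg at hcomp
      obtain ⟨p₀, hp₀, q₀, hq₀, hpq₀, hnadj₀⟩ := hcomp
      have hmain : ∃ a b, a ∈ s ∧ b ∈ s ∧ a ≠ b ∧ ¬G.Adj a b ∧ a ∉ K ∧
          (∀ c ∈ K, c ≠ b → G.Adj c b) := by
        by_cases hcase : ∃ c ∈ K, ∃ z ∈ s, z ∉ K ∧ z ≠ c ∧ ¬G.Adj z c
        · obtain ⟨c, hcK, z, hzs, hzK, hzc, hznadj⟩ := hcase
          exact ⟨z, c, hzs, hKs hcK, hzc, hznadj, hzK,
            fun c' hc' hcb => hKcl c' hc' c hcK hcb⟩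
        · push_neg at hcase
          have hp₀K : p₀ ∉ K := by
            intro hmem
            by_cases hq₀K : q₀ ∈ K
            · exact hnadj₀ (hKcl p₀ hmem q₀ hq₀K hpq₀)
            · exact hnadj₀ (hcase p₀ hmem q₀ hq₀ hq₀K (Ne.symm hpq₀)).symm
          have hq₀K : q₀ ∉ K := by
            intro hmem
            exact hnadj₀ (hcase q₀ hmem p₀ hp₀ hp₀K hpq₀)
          exact ⟨p₀, q₀, hp₀, hq₀, hpq₀, hnadj₀, hp₀K,
            fun c hc hcb => (hcase c hc q₀ hq₀ hq₀K (Ne.symm hcb)).symm⟩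
      obtain ⟨a, b, has, hbs, hab, hnadj, haK, hF⟩ := hmain
      -- minimal separator
      set 𝒮 : Finset (Finset V) := s.powerset.filter (fun T => Sep G s T a b) with h𝒮
      have h𝒮ne : 𝒮.Nonempty := by
        refine ⟨s \ {a, b}, ?_⟩
        rw [h𝒮, Finset.mem_filter, Finset.mem_powerset]
        exact ⟨Finset.sdiff_subset, sep_exists hab hnadj⟩
      obtain ⟨S, hS𝒮, hSmin⟩ := Finset.exists_min_image 𝒮 Finset.card h𝒮ne
      rw [h𝒮, Finset.mem_filter, Finset.mem_powerset] at hS𝒮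
      have hSep : Sep G s S a b := hS𝒮.2
      have hmincard : ∀ T, Sep G s T a b → S.card ≤ T.card := by
        intro T hT
        exact hSmin T (by rw [h𝒮, Finset.mem_filter, Finset.mem_powerset]; exact ⟨hT.1, hT⟩)
      -- erase walks
      have herase : ∀ x ∈ S, Nonempty ((indG G (s \ S.erase x)).Walk a b) := by
        intro x hx
        by_contra hno
        have hSep' : Sep G s (S.erase x) a b := by
          refine ⟨(S.erase_subset x).trans hSep.1,
            fun h => hSep.2.1 (S.erase_subset x h),
            fun h => hSep.2.2.1 (S.erase_subset x h), ?_⟩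
          intro w
          exact hno ⟨w⟩
        have := hmincard _ hSep'
        rw [Finset.card_erase_of_mem hx] at this
        have hxcard : 1 ≤ S.card := Finset.card_pos.mpr ⟨x, hx⟩
        omega
      -- sides
      set A : Finset V :=
        (s \ S).filter (fun z => Nonempty ((indG G (s \ S)).Walk a z)) with hA
      set B : Finset V :=
        (s \ S).filter (fun z => Nonempty ((indG G (s \ S)).Walk b z)) with hB
      have hAdef : ∀ z, z ∈ A ↔ z ∈ s \ S ∧ Nonempty ((indG G (s \ S)).Walk a z) := by
        intro z; rw [hA, Finset.mem_filter]
      have hBdef : ∀ z, z ∈ B ↔ z ∈ s \ S ∧ Nonempty ((indG G (s \ S)).Walk b z) := by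
        intro z; rw [hB, Finset.mem_filter]
      have hAB : ∀ z, z ∈ A → z ∈ B → False := by
        intro z hzA hzB
        obtain ⟨wa⟩ := ((hAdef z).mp hzA).2
        obtain ⟨wb⟩ := ((hBdef z).mp hzB).2
        exact hSep.2.2.2 (wa.append wb.reverse)
      have haA : a ∈ A := (hAdef a).mpr ⟨Finset.mem_sdiff.mpr ⟨has, hSep.2.1⟩, ⟨Walk.nil⟩⟩
      have hbB : b ∈ B := (hBdef b).mpr ⟨Finset.mem_sdiff.mpr ⟨hbs, hSep.2.2.1⟩, ⟨Walk.nil⟩⟩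
      have hbA : b ∉ A := fun h => hAB b h hbB
      have hnbrA : ∀ x ∈ S, ∃ z ∈ A, G.Adj z x := by
        intro x hx
        obtain ⟨z, hz1, hz2⟩ := sep_nbr has hSep hx (herase x hx)
        exact ⟨z, (hAdef z).mpr hz1, hz2⟩
      have hnbrB : ∀ x ∈ S, ∃ z ∈ B, G.Adj z x := by
        intro x hx
        obtain ⟨z, hz1, hz2⟩ := sep_nbr hbs (sep_swap hSep) hx
          ⟨(Classical.choice (herase x hx)).reverse⟩
        exact ⟨z, (hBdef z).mpr hz1, hz2⟩
      have hScl : ∀ x ∈ S, ∀ y ∈ S, x ≠ y → G.Adj x y := by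
        intro x hx y hy hxy
        exact sep_clique hch hAdef hBdef hAB hx hy hxy
          (hnbrA x hx) (hnbrA y hy) (hnbrB x hx) (hnbrB y hy)
      -- recurse on A ∪ S
      have hAsub : A ⊆ s \ S := by rw [hA]; exact Finset.filter_subset _ _
      have hsub' : A ∪ S ⊆ s := by
        intro z hz
        rw [Finset.mem_union] at hz
        rcases hz with hz | hz
        · exact (Finset.mem_sdiff.mp (hAsub hz)).1
        · exact hSep.1 hz
      have hbs' : b ∉ A ∪ S := by
        rw [Finset.mem_union]
        rintro (h | h)
        · exact hbA h
        · exact hSep.2.2.1 h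
      have hcard' : (A ∪ S).card ≤ n := by
        have h1 : A ∪ S ⊆ s.erase b := by
          intro z hz
          exact Finset.mem_erase.mpr ⟨fun h => hbs' (h ▸ hz), hsub' hz⟩
        have h2 := Finset.card_le_card h1
        rw [Finset.card_erase_of_mem hbs] at h2
        have : 1 ≤ s.card := Finset.card_pos.mpr ⟨b, hbs⟩
        omega
      have haAS : a ∈ (A ∪ S) \ S := by
        rw [Finset.mem_sdiff, Finset.mem_union]
        exact ⟨Or.inl haA, hSep.2.1⟩
      obtain ⟨v, hv1, hv2, hv3⟩ := ih (A ∪ S) hcard' S Finset.subset_union_right hScl ⟨a, haAS⟩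
      have hvA : v ∈ A := by
        rcases Finset.mem_union.mp hv1 with h | h
        · exact h
        · exact absurd h hv2
      have hvsS : v ∈ s \ S := hAsub hvA
      -- neighbours of v in s lie in A ∪ S
      have hclose : ∀ z, z ∈ s → G.Adj v z → z ∈ A ∪ S := by
        intro z hz hadj
        rw [Finset.mem_union]
        by_cases hzS : z ∈ S
        · exact Or.inr hzS
        · left
          have hzsS : z ∈ s \ S := Finset.mem_sdiff.mpr ⟨hz, hzS⟩
          obtain ⟨wv⟩ := ((hAdef v).mp hvA).2
          exact (hAdef z).mpr ⟨hzsS, ⟨wv.append (Walk.cons ⟨hadj, hvsS, hzsS⟩ Walk.nil)⟩⟩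
      have hvs : v ∈ s := (Finset.mem_sdiff.mp hvsS).1
      refine ⟨v, hvs, ?_, ?_⟩
      · intro hvK
        have hvb : v ≠ b := fun h => hbA (h ▸ hvA)
        have : b ∈ A ∪ S := hclose b hbs (hF v hvK hvb)
        exact hbs' this
      · intro p q hp hq hvp hvq hpq
        exact hv3 p q (hclose p hp hvp) (hclose q hq hvq) hvp hvq hpq

/-- Existence of a removable edge: an edge in a triangle whose common
neighbourhood is a clique. -/
lemma removable {G : SimpleGraph V} (hch : Chordal G) :
    ∀ (n : ℕ) (s : Finset V), s.card ≤ n →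
      (∃ u ∈ s, ∃ v ∈ s, ∃ w ∈ s, G.Adj u v ∧ G.Adj v w ∧ G.Adj w u) →
      ∃ u ∈ s, ∃ v ∈ s, G.Adj u v ∧ (∃ w ∈ s, G.Adj u w ∧ G.Adj v w) ∧
        ∀ x y, x ∈ s → y ∈ s → G.Adj u x → G.Adj v x → G.Adj u y → G.Adj v y → x ≠ y →
          G.Adj x y := by
  intro n
  induction n with
  | zero =>
    intro s hcard htri
    obtain ⟨u, hu, _⟩ := htri
    have : s = ∅ := Finset.card_eq_zero.mp (Nat.le_zero.mp hcard)
    rw [this] at hu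
    simp at hu
  | succ n ih =>
    intro s hcard htri
    obtain ⟨u₀, hu₀, v₀, hv₀, w₀, hw₀, h1, h2, h3⟩ := htri
    have hne : (s \ (∅ : Finset V)).Nonempty := ⟨u₀, by simpa using hu₀⟩
    obtain ⟨v, hvs, -, hsimp⟩ := dirac hch (n + 1) s hcard ∅ (Finset.empty_subset s)
      (by simp) hne
    by_cases hdeg : ∃ z1 ∈ s, ∃ z2 ∈ s, z1 ≠ z2 ∧ G.Adj v z1 ∧ G.Adj v z2
    · obtain ⟨z1, hz1, z2, hz2, hz12, hadj1, hadj2⟩ := hdeg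
      refine ⟨v, hvs, z1, hz1, hadj1, ⟨z2, hz2, hadj2, ?_⟩, ?_⟩
      · exact hsimp z1 z2 hz1 hz2 hadj1 hadj2 hz12
      · intro x y hx hy hvx _ hvy _ hxy
        exact hsimp x y hx hy hvx hvy hxy
    · -- v has at most one neighbour in s; remove it
      push_neg at hdeg
      have hvtri : v ∉ ({u₀, v₀, w₀} : Finset V) := by
        simp only [Finset.mem_insert, Finset.mem_singleton]
        rintro (rfl | rfl | rfl)
        · exact hdeg v₀ hv₀ w₀ hw₀ h2.ne h1 h3.symm
        · exact hdeg u₀ hu₀ w₀ hw₀ h3.ne' h1.symm h2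
        · exact hdeg u₀ hu₀ v₀ hv₀ h1.ne h3 h2.symm
      have htri' : ∃ u ∈ s.erase v, ∃ v' ∈ s.erase v, ∃ w ∈ s.erase v,
          G.Adj u v' ∧ G.Adj v' w ∧ G.Adj w u := by
        simp only [Finset.mem_insert, Finset.mem_singleton, not_or] at hvtri
        exact ⟨u₀, Finset.mem_erase.mpr ⟨fun h => hvtri.1 h.symm, hu₀⟩,
          v₀, Finset.mem_erase.mpr ⟨fun h => hvtri.2.1 h.symm, hv₀⟩,
          w₀, Finset.mem_erase.mpr ⟨fun h => hvtri.2.2 h.symm, hw₀⟩, h1, h2, h3⟩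
      have hcard' : (s.erase v).card ≤ n := by
        rw [Finset.card_erase_of_mem hvs]
        have : 1 ≤ s.card := Finset.card_pos.mpr ⟨v, hvs⟩
        omega
      obtain ⟨u, hu, v', hv', hadj, ⟨w, hw, hw1, hw2⟩, hcl⟩ := ih (s.erase v) hcard' htri'
      have hvnot : ∀ x, x ∈ s → G.Adj u x → G.Adj v' x → x ≠ v := by
        intro x hx hux hv'x hxv
        subst hxv
        exact hdeg u (Finset.mem_of_mem_erase hu) v'
          (Finset.mem_of_mem_erase hv') hadj.ne hux.symm hv'x.symm
      refine ⟨u, Finset.mem_of_mem_erase hu, v', Finset.mem_of_mem_erase hv', hadj,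
        ⟨w, Finset.mem_of_mem_erase hw, hw1, hw2⟩, ?_⟩
      intro x y hx hy hux hvx huy hvy hxy
      exact hcl x y (Finset.mem_erase.mpr ⟨hvnot x hx hux hvx, hx⟩)
        (Finset.mem_erase.mpr ⟨hvnot y hy huy hvy, hy⟩) hux hvx huy hvy hxy


lemma del_conn {G : SimpleGraph V} (hconn : G.Connected) {u v w : V}
    (huv : G.Adj u v) (huw : G.Adj u w) (hvw : G.Adj v w) :
    (G.deleteEdges {s(u, v)}).Connected := by
  classical
  have hwu : w ≠ u := huw.ne'
  have hwv : w ≠ v := hvw.ne'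
  have hAuw : (G.deleteEdges {s(u, v)}).Adj u w := by
    rw [deleteEdges_adj]
    refine ⟨huw, ?_⟩
    simp only [Set.mem_singleton_iff, Sym2.eq_iff]
    rintro (⟨-, rfl⟩ | ⟨rfl, rfl⟩)
    · exact hwv rfl
    · exact huv.ne rfl
  have hAwv : (G.deleteEdges {s(u, v)}).Adj w v := by
    rw [deleteEdges_adj]
    refine ⟨hvw.symm, ?_⟩
    simp only [Set.mem_singleton_iff, Sym2.eq_iff]
    rintro (⟨rfl, -⟩ | ⟨rfl, rfl⟩)
    · exact hwu rfl
    · exact huv.ne rfl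
  have hadjR : ∀ a b, G.Adj a b → (G.deleteEdges {s(u, v)}).Reachable a b := by
    intro a b hab
    by_cases he : s(a, b) = s(u, v)
    · rw [Sym2.eq_iff] at he
      rcases he with ⟨rfl, rfl⟩ | ⟨rfl, rfl⟩
      · exact hAuw.reachable.trans hAwv.reachable
      · exact (hAwv.symm.reachable.trans hAuw.symm.reachable)
    · exact (SimpleGraph.deleteEdges_adj.mpr ⟨hab, by simpa using he⟩).reachable
  have hlift : ∀ (a b : V) (p : G.Walk a b), (G.deleteEdges {s(u, v)}).Reachable a b := by
    intro a b p
    induction p with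
    | nil => exact Reachable.refl _
    | cons h p ih => exact (hadjR _ _ h).trans ih
  haveI := hconn.nonempty
  refine Connected.mk ?_
  intro a b
  obtain ⟨p⟩ := hconn.preconnected a b
  exact hlift a b p

lemma del_chordal_core {G : SimpleGraph V} (hch : Chordal G) {u v a : V} (huv : G.Adj u v)
    (hclq : ∀ x y, G.Adj u x → G.Adj v x → G.Adj u y → G.Adj v y → x ≠ y → G.Adj x y)
    (pG : G.Walk a a) (hp : pG.IsCycle) (hu : u ∈ pG.support) (hv : v ∈ pG.support)
    (hne : s(u, v) ∉ pG.edges) :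
    ∃ c d, c ∈ pG.support ∧ d ∈ pG.support ∧ G.Adj c d ∧ s(c, d) ∉ pG.edges ∧
      s(c, d) ≠ s(u, v) := by
  obtain ⟨r, t, hrpath, htpath, hr2, ht2, hsum, hiff, hsupr, hsupt, hint⟩ :=
    cycle_chord_split pG hp hu hv huv hne
  by_cases ht3 : 3 ≤ t.length
  · -- cycle C1 = uv + t
    have hC1 : (Walk.cons huv t).IsCycle := by
      rw [Walk.cons_isCycle_iff]
      exact ⟨htpath, fun h => hne ((hiff _).mpr (Or.inr h))⟩
    have h4 : 4 ≤ (Walk.cons huv t).length := by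
      rw [Walk.length_cons]; omega
    obtain ⟨c, d, hc, hd, hcd, hnotin⟩ := hch u (Walk.cons huv t) hC1 h4
    rw [Walk.support_cons, List.mem_cons] at hc hd
    have hcp : c ∈ pG.support := by rcases hc with rfl | hc; exacts [hu, hsupt c hc]
    have hdp : d ∈ pG.support := by rcases hd with rfl | hd; exacts [hu, hsupt d hd]
    have hscd : s(c, d) ≠ s(u, v) := by
      intro h
      exact hnotin (by rw [h, Walk.edges_cons]; simp)
    refine ⟨c, d, hcp, hdp, hcd, ?_, hscd⟩
    intro hmem
    rcases (hiff _).mp hmem with hr | ht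
    · -- edge of r: endpoints in {u,v}
      have hcr : c ∈ r.support := r.fst_mem_support_of_mem_edges hr
      have hdr : d ∈ r.support := r.snd_mem_support_of_mem_edges hr
      have hcu : c = u ∨ c = v := by
        rcases hc with rfl | hc
        · exact Or.inl rfl
        · exact hint c hcr hc
      have hdu : d = u ∨ d = v := by
        rcases hd with rfl | hd
        · exact Or.inl rfl
        · exact hint d hdr hd
      apply hscd
      rcases hcu with rfl | rfl <;> rcases hdu with rfl | rfl
      · exact absurd rfl hcd.ne
      · rfl
      · exact Sym2.eq_swap
      · exact absurd rfl hcd.ne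
    · exact hnotin (by rw [Walk.edges_cons]; exact List.mem_cons_of_mem _ ht)
  · by_cases hr3 : 3 ≤ r.length
    · have hC2 : (Walk.cons huv.symm r).IsCycle := by
        rw [Walk.cons_isCycle_iff]
        refine ⟨hrpath, fun h => hne ?_⟩
        rw [Sym2.eq_swap] at h
        exact (hiff _).mpr (Or.inl h)
      have h4 : 4 ≤ (Walk.cons huv.symm r).length := by
        rw [Walk.length_cons]; omega
      obtain ⟨c, d, hc, hd, hcd, hnotin⟩ := hch v (Walk.cons huv.symm r) hC2 h4
      rw [Walk.support_cons, List.mem_cons] at hc hd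
      have hcp : c ∈ pG.support := by rcases hc with rfl | hc; exacts [hv, hsupr c hc]
      have hdp : d ∈ pG.support := by rcases hd with rfl | hd; exacts [hv, hsupr d hd]
      have hscd : s(c, d) ≠ s(u, v) := by
        intro h
        refine hnotin ?_
        rw [Walk.edges_cons]
        have : s(v, u) = s(u, v) := Sym2.eq_swap
        rw [h, ← this]
        simp
      refine ⟨c, d, hcp, hdp, hcd, ?_, hscd⟩
      intro hmem
      rcases (hiff _).mp hmem with hr | ht
      · exact hnotin (by rw [Walk.edges_cons]; exact List.mem_cons_of_mem _ hr)
      · have hct : c ∈ t.support := t.fst_mem_support_of_mem_edges ht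
        have hdt : d ∈ t.support := t.snd_mem_support_of_mem_edges ht
        have hcu : c = u ∨ c = v := by
          rcases hc with rfl | hc
          · exact Or.inr rfl
          · rcases hint c hc hct with h | h
            · exact Or.inl h
            · exact Or.inr h
        have hdu : d = u ∨ d = v := by
          rcases hd with rfl | hd
          · exact Or.inr rfl
          · rcases hint d hd hdt with h | h
            · exact Or.inl h
            · exact Or.inr h
        apply hscd
        rcases hcu with rfl | rfl <;> rcases hdu with rfl | rfl
        · exact absurd rfl hcd.ne
        · rfl
        · exact Sym2.eq_swap
        · exact absurd rfl hcd.ne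
    · -- both of length 2
      have hrl : r.length = 2 := by omega
      have htl : t.length = 2 := by omega
      obtain ⟨m1, hum1, hm1v, hm1r, hredges⟩ := walk_len2 r hrl
      obtain ⟨m2, hvm2, hm2u, hm2t, htedges⟩ := walk_len2 t htl
      have hm1u : m1 ≠ u := hum1.ne'
      have hm1vne : m1 ≠ v := hm1v.ne
      have hm2v : m2 ≠ v := hvm2.ne'
      have hm2une : m2 ≠ u := hm2u.ne
      have h12 : m1 ≠ m2 := by
        intro h
        subst h
        rcases hint m1 hm1r hm2t with h | h
        · exact hm1u h
        · exact hm1vne h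
      have hadj12 : G.Adj m1 m2 :=
        hclq m1 m2 hum1 hm1v.symm hm2u.symm hvm2 h12
      refine ⟨m1, m2, hsupr m1 hm1r, hsupt m2 hm2t, hadj12, ?_, ?_⟩
      · intro hmem
        rcases (hiff _).mp hmem with hr | ht
        · rw [hredges] at hr
          simp only [List.mem_cons, List.mem_singleton, List.not_mem_nil, or_false] at hr
          rcases hr with hr | hr <;> rw [Sym2.eq_iff] at hr
          · rcases hr with ⟨rfl, -⟩ | ⟨-, rfl⟩
            · exact hm1u rfl
            · exact hm2une rfl
          · rcases hr with ⟨-, rfl⟩ | ⟨rfl, -⟩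
            · exact hm2v rfl
            · exact hm1vne rfl
        · rw [htedges] at ht
          simp only [List.mem_cons, List.mem_singleton, List.not_mem_nil, or_false] at ht
          rcases ht with ht | ht <;> rw [Sym2.eq_iff] at ht
          · rcases ht with ⟨rfl, -⟩ | ⟨-, rfl⟩
            · exact hm1vne rfl
            · exact hm2v rfl
          · rcases ht with ⟨-, rfl⟩ | ⟨rfl, -⟩
            · exact hm2une rfl
            · exact hm1u rfl
      · intro h
        rw [Sym2.eq_iff] at h
        rcases h with ⟨h1, -⟩ | ⟨h1, -⟩
        · exact hm1u h1
        · exact hm1vne h1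

lemma del_chordal {G : SimpleGraph V} (hch : Chordal G) {u v : V} (huv : G.Adj u v)
    (hclq : ∀ x y, G.Adj u x → G.Adj v x → G.Adj u y → G.Adj v y → x ≠ y → G.Adj x y) :
    Chordal (G.deleteEdges {s(u, v)}) := by
  intro a p hp h4
  have hsub : ∀ e ∈ p.edges, e ∈ G.edgeSet := fun e he =>
    edgeSet_mono (G.deleteEdges_le _) (p.edges_subset_edgeSet he)
  have hcyc : (p.transfer G hsub).IsCycle := hp.transfer _
  have h4' : 4 ≤ (p.transfer G hsub).length := by rw [Walk.length_transfer]; exact h4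
  obtain ⟨c, d, hc, hd, hcd, hnotin⟩ := hch a (p.transfer G hsub) hcyc h4'
  rw [Walk.support_transfer] at hc hd
  rw [Walk.edges_transfer] at hnotin
  by_cases hscd : s(c, d) = s(u, v)
  · -- surgery case
    have hup : u ∈ (p.transfer G hsub).support := by
      rw [Walk.support_transfer]
      rw [Sym2.eq_iff] at hscd
      rcases hscd with ⟨rfl, rfl⟩ | ⟨rfl, rfl⟩
      exacts [hc, hd]
    have hvp : v ∈ (p.transfer G hsub).support := by
      rw [Walk.support_transfer]
      rw [Sym2.eq_iff] at hscd
      rcases hscd with ⟨rfl, rfl⟩ | ⟨rfl, rfl⟩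
      exacts [hd, hc]
    have hnuv : s(u, v) ∉ (p.transfer G hsub).edges := by
      rw [Walk.edges_transfer]
      exact fun hmem => hnotin (by rw [hscd]; exact hmem)
    obtain ⟨c', d', hc', hd', hcd', hnot', hne'⟩ :=
      del_chordal_core hch huv hclq (p.transfer G hsub) hcyc hup hvp hnuv
    rw [Walk.support_transfer] at hc' hd'
    rw [Walk.edges_transfer] at hnot'
    exact ⟨c', d', hc', hd', SimpleGraph.deleteEdges_adj.mpr ⟨hcd', by simpa using hne'⟩, hnot'⟩
  · exact ⟨c, d, hc, hd, SimpleGraph.deleteEdges_adj.mpr ⟨hcd, by simpa using hscd⟩, hnotin⟩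


/-- The conclusion of the key lemma. -/
def KeyConcl (G : SimpleGraph V) : Prop :=
  ∃ T, T ≤ G ∧ T.IsTree ∧ ∃ (q : ℕ) (e : Fin q → Sym2 V), Function.Injective e ∧
    Set.range e = G.edgeSet \ T.edgeSet ∧
    ∀ i : Fin q, ∃ (a : V) (C : G.Walk a a), C.IsCycle ∧ e i ∈ C.edges ∧ C.length = 3 ∧
      ∀ f ∈ C.edges, f ∈ T.edgeSet ∪ {x | ∃ j ≤ i, e j = x}

lemma tree_case {G : SimpleGraph V} (hconn : G.Connected) (hac : G.IsAcyclic) :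
    KeyConcl G := by
  refine ⟨G, le_refl G, ⟨hconn, hac⟩, 0, Fin.elim0, fun i => i.elim0, ?_, fun i => i.elim0⟩
  rw [Set.range_eq_empty, Set.diff_self]

lemma key : ∀ (n : ℕ) (G : SimpleGraph V), G.edgeSet.ncard ≤ n → G.Connected → Chordal G →
    KeyConcl G := by
  intro n
  induction n with
  | zero =>
    intro G hcard hconn hch
    by_cases hac : G.IsAcyclic
    · exact tree_case hconn hac
    · exfalso
      rw [IsAcyclic] at hac
      push_neg at hac
      obtain ⟨v₀, c, hc⟩ := hac
      have hne : G.edgeSet.Nonempty := by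
        cases c with
        | nil => exact absurd rfl hc.ne_nil
        | cons h w => exact ⟨_, G.mem_edgeSet.mpr h⟩
      have := (Set.ncard_pos (Set.toFinite _)).mpr hne
      omega
  | succ n ih =>
    intro G hcard hconn hch
    by_cases hac : G.IsAcyclic
    · exact tree_case hconn hac
    · rw [IsAcyclic] at hac
      push_neg at hac
      obtain ⟨v₀, c, hc⟩ := hac
      obtain ⟨u, -, v, -, huv, ⟨w, -, huw, hvw⟩, hclq0⟩ :=
        removable hch (Fintype.card V) Finset.univ (le_of_eq (Finset.card_univ))
          (by
            obtain ⟨x, y, z, h1, h2, h3⟩ := exists_triangle hch ⟨v₀, c, hc⟩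
            exact ⟨x, Finset.mem_univ x, y, Finset.mem_univ y, z, Finset.mem_univ z,
              h1, h2, h3⟩)
      have hclq : ∀ x y, G.Adj u x → G.Adj v x → G.Adj u y → G.Adj v y → x ≠ y → G.Adj x y :=
        fun x y h1 h2 h3 h4 h5 =>
          hclq0 x y (Finset.mem_univ x) (Finset.mem_univ y) h1 h2 h3 h4 h5
      set G' := G.deleteEdges {s(u, v)} with hG'
      have hG'le : G' ≤ G := G.deleteEdges_le _
      have hsuvG : s(u, v) ∈ G.edgeSet := huv
      have hG'edge : G'.edgeSet = G.edgeSet \ {s(u, v)} := G.edgeSet_deleteEdges _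
      have hsuvG' : s(u, v) ∉ G'.edgeSet := by rw [hG'edge]; simp
      have hcard' : G'.edgeSet.ncard ≤ n := by
        have hss : G'.edgeSet ⊂ G.edgeSet := by
          rw [Set.ssubset_def]
          refine ⟨edgeSet_mono hG'le, fun hsub => ?_⟩
          have := hsub hsuvG
          exact hsuvG' this
        have := Set.ncard_lt_ncard hss (Set.toFinite _)
        omega
      obtain ⟨T, hTle, hTree, q, e', hinj, hrange, hcyc⟩ :=
        ih G' hcard' (del_conn hconn huv huw hvw) (del_chordal hch huv hclq)
      have hTuv : s(u, v) ∉ T.edgeSet := fun h => hsuvG' (edgeSet_mono hTle h)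
      have hnotr : s(u, v) ∉ Set.range e' := by
        rw [hrange]
        exact fun h => hsuvG' h.1
      have hrange' : Set.range (Fin.snoc e' (s(u, v)) : Fin (q + 1) → Sym2 V)
          = insert (s(u, v)) (Set.range e') := by
        ext f
        constructor
        · rintro ⟨i, rfl⟩
          induction i using Fin.lastCases with
          | last => left; rw [Fin.snoc_last]
          | cast j => right; exact ⟨j, by simp⟩
        · rintro (rfl | ⟨j, rfl⟩)
          · exact ⟨Fin.last q, Fin.snoc_last _ _⟩
          · exact ⟨j.castSucc, Fin.snoc_castSucc _ _ _⟩
      have hmemG' : ∀ f ∈ G'.edgeSet, f ∈ T.edgeSet ∨ ∃ k, e' k = f := by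
        intro f hf
        by_cases hT : f ∈ T.edgeSet
        · exact Or.inl hT
        · right
          have : f ∈ Set.range e' := by rw [hrange]; exact ⟨hf, hT⟩
          exact this
      refine ⟨T, hTle.trans hG'le, hTree, q + 1, Fin.snoc e' (s(u, v)), ?_, ?_, ?_⟩
      · -- injectivity
        intro i j hij
        induction i using Fin.lastCases with
        | last =>
          induction j using Fin.lastCases with
          | last => rfl
          | cast j' =>
            rw [Fin.snoc_last, Fin.snoc_castSucc] at hij
            exact absurd ⟨j', hij.symm⟩ hnotr
        | cast i' =>
          induction j using Fin.lastCases with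
          | last =>
            rw [Fin.snoc_last, Fin.snoc_castSucc] at hij
            exact absurd ⟨i', hij⟩ hnotr
          | cast j' =>
            rw [Fin.snoc_castSucc, Fin.snoc_castSucc] at hij
            rw [hinj hij]
      · -- range
        rw [hrange', hrange, hG'edge]
        ext f
        simp only [Set.mem_insert_iff, Set.mem_diff, Set.mem_singleton_iff]
        constructor
        · rintro (rfl | ⟨⟨h1, h2⟩, h3⟩)
          · exact ⟨hsuvG, hTuv⟩
          · exact ⟨h1, h3⟩
        · rintro ⟨h1, h2⟩
          by_cases hf : f = s(u, v)
          · exact Or.inl hf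
          · exact Or.inr ⟨⟨h1, hf⟩, h2⟩
      · -- cycles
        intro i
        induction i using Fin.lastCases with
        | last =>
          -- the triangle u v w
          have hwu : G.Adj w u := huw.symm
          have hinner : (Walk.cons hvw (Walk.cons hwu Walk.nil)).IsPath := by
            apply Walk.IsPath.mk'
            simp only [Walk.support_cons, Walk.support_nil, List.nodup_cons,
              List.mem_cons, List.mem_singleton, List.not_mem_nil, not_or,
              List.nodup_nil, and_true, not_false_iff]
            exact ⟨⟨hvw.ne, huv.ne'⟩, huw.ne'⟩
          have hC : (Walk.cons huv (Walk.cons hvw (Walk.cons hwu Walk.nil))).IsCycle := by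
            rw [Walk.cons_isCycle_iff]
            refine ⟨hinner, ?_⟩
            simp [Sym2.eq_iff, huv.ne, huw.ne, hvw.ne, huv.ne', huw.ne', hvw.ne']
          refine ⟨u, Walk.cons huv (Walk.cons hvw (Walk.cons hwu Walk.nil)), hC, ?_, by simp, ?_⟩
          · rw [Fin.snoc_last]
            simp
          · intro f hf
            simp only [Walk.edges_cons, Walk.edges_nil, List.mem_cons, List.mem_singleton,
              List.not_mem_nil, or_false] at hf
            simp only [Set.mem_union, Set.mem_setOf_eq]
            rcases hf with rfl | rfl | rfl
            · exact Or.inr ⟨Fin.last q, le_refl _, Fin.snoc_last _ _⟩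
            · have hvwG' : s(v, w) ∈ G'.edgeSet := by
                rw [hG'edge]
                refine ⟨hvw, ?_⟩
                simp [Sym2.eq_iff, huv.ne', huw.ne']
              rcases hmemG' _ hvwG' with h | ⟨k, hk⟩
              · exact Or.inl h
              · exact Or.inr ⟨k.castSucc, Fin.le_last _,
                  by rw [Fin.snoc_castSucc]; exact hk⟩
            · have hwuG' : s(w, u) ∈ G'.edgeSet := by
                rw [hG'edge]
                refine ⟨hwu, ?_⟩
                simp [Sym2.eq_iff, huw.ne', hvw.ne']
              rcases hmemG' _ hwuG' with h | ⟨k, hk⟩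
              · exact Or.inl h
              · exact Or.inr ⟨k.castSucc, Fin.le_last _,
                  by rw [Fin.snoc_castSucc]; exact hk⟩
        | cast j =>
          obtain ⟨a, C, hCc, hCm, hCl, hCe⟩ := hcyc j
          have hsub : ∀ f ∈ C.edges, f ∈ G.edgeSet := fun f hf =>
            edgeSet_mono hG'le (C.edges_subset_edgeSet hf)
          refine ⟨a, C.transfer G hsub, hCc.transfer _, ?_, ?_, ?_⟩
          · rw [Walk.edges_transfer, Fin.snoc_castSucc]
            exact hCm
          · rw [Walk.length_transfer]
            exact hCl
          · intro f hf
            rw [Walk.edges_transfer] at hf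
            rcases hCe f hf with h | ⟨k, hk, hek⟩
            · exact Or.inl h
            · refine Or.inr ⟨k.castSucc, ?_, ?_⟩
              · rw [Fin.castSucc_le_castSucc_iff]
                exact hk
              · rw [Fin.snoc_castSucc]
                exact hek

end DPAux

/-- every (connected) chordal graph is DP-good. -/
theorem dpGood_of_chordal {V : Type} [Fintype V] [DecidableEq V]
    (G : SimpleGraph V) (hconn : G.Connected)
    (hchordal : ∀ (a : V) (p : G.Walk a a), p.IsCycle → 4 ≤ p.length →
      ∃ u v : V, u ∈ p.support ∧ v ∈ p.support ∧ G.Adj u v ∧ s(u, v) ∉ p.edges) :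
    DPGood G := by
  obtain ⟨T, hTle, hTree, q, e, hinj, hrange, hcyc⟩ :=
    DPAux.key G.edgeSet.ncard G le_rfl hconn hchordal
  have girth_eq : ∀ i : Fin q, edgeGirth G (e i) = (3 : ℕ∞) := by
    intro i
    obtain ⟨a, C, hC, hmem, hlen, -⟩ := hcyc i
    apply le_antisymm
    · have h1 : edgeGirth G (e i) ≤ (C.length : ℕ∞) :=
        iInf_le_of_le a (iInf_le_of_le C (iInf_le_of_le hC (iInf_le_of_le hmem (le_refl _))))
      rw [hlen] at h1
      exact le_trans h1 (by norm_num)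
    · refine le_iInf fun a' => le_iInf fun p => le_iInf fun hcyc' => le_iInf fun _ => ?_
      have := hcyc'.three_le_length
      exact_mod_cast this
  refine ⟨hconn, T, hTle, hTree, q, e, hinj, hrange, ?_, ?_⟩
  · intro i j _
    rw [girth_eq i, girth_eq j]
  · intro i
    obtain ⟨a, C, hC, hmem, hlen, hcond⟩ := hcyc i
    exact ⟨3, ⟨1, by norm_num⟩, by rw [girth_eq i]; norm_num, a, C, hC, hmem, hlen, hcond⟩
end

section
/- Let G be a graph and E* ⊆ E_G(V₁,V₂) for disjoint vertex subsets V₁,V₂ of V(G). If g_G(E*) = 4, then there exists M ∈ ℕ such that P_DP(G,m) < P(G,m) for all integers m ≥ M. -/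
open SimpleGraph

attribute [local instance] Classical.propDecidable

universe u
variable {V : Type u}

set_option maxHeartbeats 1600000

namespace DPAux

section P2
variable {V : Type} {A : Type} [AddCommGroup A]


def wsum {H : SimpleGraph V} (c : V → V → A) {u v : V} (p : H.Walk u v) : A :=
  (p.darts.map fun d => c d.fst d.snd).sum

@[simp] lemma wsum_nil {H : SimpleGraph V} (c : V → V → A) (u : V) :
    wsum c (Walk.nil : H.Walk u u) = 0 := rfl

@[simp] lemma wsum_cons {H : SimpleGraph V} (c : V → V → A) {u v w : V}
    (h : H.Adj u v) (p : H.Walk v w) :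
    wsum c (Walk.cons h p) = c u v + wsum c p := by
  simp [wsum]

@[simp] lemma wsum_append {H : SimpleGraph V} (c : V → V → A) {u v w : V}
    (p : H.Walk u v) (q : H.Walk v w) :
    wsum c (p.append q) = wsum c p + wsum c q := by
  simp [wsum, Walk.darts_append]

lemma wsum_reverse {H : SimpleGraph V} (c : V → V → A)
    (hanti : ∀ u v, c v u = - c u v) {u v : V} (p : H.Walk u v) :
    wsum c p.reverse = - wsum c p := by
  induction p with
  | nil => simp
  | cons h q ih =>
    rw [Walk.reverse_cons, wsum_append, ih, wsum_cons, wsum_cons, wsum_nil, hanti]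
    abel

lemma wsum_rotate {H : SimpleGraph V} [DecidableEq V] (c : V → V → A) {u v : V}
    (p : H.Walk v v) (h : u ∈ p.support) :
    wsum c (p.rotate u h) = wsum c p := by
  unfold wsum
  exact List.Perm.sum_eq (List.Perm.map _ (Walk.rotate_darts p u h).perm)

/-- The constraint system: `f` satisfies all difference constraints on `S`. -/
def Good (S : Finset (Sym2 V)) (c : V → V → A) (f : V → A) : Prop :=
  ∀ u v : V, s(u, v) ∈ S → f v = f u + c u v

section Solv

variable [DecidableEq V] {S : Finset (Sym2 V)} {c : V → V → A}

/-- two walks with the same endpoints have the same `wsum`, provided all closed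
walks have zero `wsum`. -/
lemma wsum_eq_of_same_endpoints {H : SimpleGraph V}
    (hanti : ∀ u v, c v u = - c u v)
    (hall : ∀ (a : V) (p : H.Walk a a), wsum c p = 0)
    {x y : V} (w w' : H.Walk x y) : wsum c w = wsum c w' := by
  have h0 := hall x (w.append w'.reverse)
  rw [wsum_append, wsum_reverse c hanti] at h0
  linear_combination (norm := abel) h0

lemma wsum_eq_of_same_endpoints' {H : SimpleGraph V}
    (hanti : ∀ u v, c v u = - c u v)
    (hall : ∀ (a : V) (p : H.Walk a a), wsum c p = 0)
    {x x' y : V} (hxx' : x = x') (w : H.Walk x y) (w' : H.Walk x' y) :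
    wsum c w = wsum c w' := by
  subst hxx'; exact wsum_eq_of_same_endpoints hanti hall w w'

lemma exists_good_of_walks
    (hdiag : ∀ e ∈ S, ¬ e.IsDiag)
    (hanti : ∀ u v, c v u = - c u v)
    (hall : ∀ (a : V) (p : (fromEdgeSet (S : Set (Sym2 V))).Walk a a), wsum c p = 0) :
    ∃ f : V → A, Good S c f := by
  set H : SimpleGraph V := fromEdgeSet (S : Set (Sym2 V)) with hH
  have reach : ∀ v : V, H.Reachable ((H.connectedComponentMk v).out) v := by
    intro v
    exact ConnectedComponent.eq.mp (Quot.out_eq _)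
  refine ⟨fun v => wsum c (reach v).some, ?_⟩
  intro u v hs
  have hne : u ≠ v := by
    intro h; exact hdiag _ hs (by simp [h])
  have adj : H.Adj u v := by
    rw [hH, fromEdgeSet_adj]; exact ⟨by exact_mod_cast hs, hne⟩
  have hmk : H.connectedComponentMk u = H.connectedComponentMk v :=
    ConnectedComponent.eq.mpr adj.reachable
  have e : (H.connectedComponentMk u).out = (H.connectedComponentMk v).out :=
    congrArg Quot.out hmk
  have key : wsum c ((reach u).some.append (Walk.cons adj Walk.nil)) =
      wsum c (reach v).some :=
    wsum_eq_of_same_endpoints' hanti hall e _ _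
  rw [wsum_append, wsum_cons, wsum_nil, add_zero] at key
  show wsum c (reach v).some = wsum c (reach u).some + c u v
  rw [← key]

end Solv

section Surgery

variable [DecidableEq V]

lemma surgery {H : SimpleGraph V} (c : V → V → A) {a : V} (p : H.Walk a a)
    (hdup : ¬ p.support.tail.Nodup) :
    ∃ (x : V) (z₁ z₂ : H.Walk x x), wsum c z₁ + wsum c z₂ = wsum c p ∧
      0 < z₁.length ∧ 0 < z₂.length ∧ z₁.length + z₂.length = p.length := by
  rw [List.nodup_iff_count_le_one] at hdup
  push_neg at hdup
  obtain ⟨x, hcount⟩ := hdup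
  have hcount : 2 ≤ p.support.tail.count x := hcount
  have hxtail : x ∈ p.support.tail := by
    rw [← List.count_pos_iff]; omega
  have hx : x ∈ p.support := List.mem_of_mem_tail hxtail
  have hperm : (p.rotate x hx).support.tail.count x = p.support.tail.count x :=
    ((Walk.support_rotate p x hx).perm).count_eq x
  have hws : wsum c (p.rotate x hx) = wsum c p := wsum_rotate c p hx
  have hlen : (p.rotate x hx).length = p.length := by
    have h1 := congrArg Walk.length (p.take_spec hx)
    rw [Walk.length_append] at h1
    simp only [Walk.rotate, Walk.length_append]
    omega
  revert hperm hws hlen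
  generalize p.rotate x hx = p'
  intro hperm hws hlen
  cases p' with
  | nil => simp at hperm; omega
  | cons e q =>
    rename_i b _
    have hq : 2 ≤ q.support.count x := by
      simpa using hperm.symm ▸ hcount
    have hxq : x ∈ q.support := by rw [← List.count_pos_iff]; omega
    have hspec := q.take_spec hxq
    have hone := q.count_support_takeUntil_eq_one hxq
    have hsupp : q.support = (q.takeUntil x hxq).support ++ (q.dropUntil x hxq).support.tail := by
      conv_lhs => rw [← hspec]
      rw [Walk.support_append]
    have hcnt2 : 1 ≤ ((q.dropUntil x hxq).support.tail).count x := by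
      rw [hsupp, List.count_append, hone] at hq; omega
    have hnn : 0 < (q.dropUntil x hxq).length := by
      rcases Nat.eq_zero_or_pos (q.dropUntil x hxq).length with h0 | h
      · exfalso
        have hcl := (q.dropUntil x hxq).length_support
        have hle := List.count_le_length (a := x) (l := (q.dropUntil x hxq).support.tail)
        rw [List.length_tail, hcl, h0] at hle
        omega
      · exact h
    refine ⟨x, Walk.cons e (q.takeUntil x hxq), q.dropUntil x hxq, ?_, ?_, hnn, ?_⟩
    · rw [wsum_cons, ← hws]
      conv_rhs => rw [← hspec]
      rw [wsum_cons, wsum_append]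
      abel
    · simp [Walk.length_cons]
    · rw [Walk.length_cons, ← hlen]
      conv_rhs => rw [← hspec]
      rw [Walk.length_cons, Walk.length_append]
      omega

lemma wsum_closed_small {H : SimpleGraph V} (c : V → V → A)
    (hanti : ∀ u v, c v u = - c u v)
    (htri : ∀ x y z, H.Adj x y → H.Adj y z → H.Adj z x → c x y + c y z + c z x = 0)
    {a : V} (p : H.Walk a a) (hlen : p.length ≤ 3) : wsum c p = 0 := by
  cases p with
  | nil => simp
  | cons h₁ q =>
    cases q with
    | nil => exact absurd h₁ (H.loopless.irrefl a)
    | cons h₂ r =>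
      cases r with
      | nil =>
        rw [wsum_cons, wsum_cons, wsum_nil, hanti]
        abel
      | cons h₃ t =>
        cases t with
        | nil =>
          rw [wsum_cons, wsum_cons, wsum_cons, wsum_nil, add_zero, ← add_assoc]
          exact htri _ _ _ h₁ h₂ h₃
        | cons h₄ u =>
          simp [Walk.length_cons] at hlen
          omega

end Surgery


end P2

section P3
variable {V : Type} [Fintype V] [DecidableEq V]


lemma cc_mk_out {H : SimpleGraph V} (κ : H.ConnectedComponent) :
    H.connectedComponentMk κ.out = κ := κ.out_eq

lemma card_option_subtype_notmem (T : Finset V) :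
    Nat.card (Option {v : V // v ∉ T}) = Fintype.card V - T.card + 1 := by
  rw [Nat.card_eq_fintype_card, Fintype.card_option, Fintype.card_subtype_compl,
    Fintype.card_coe]

lemma card_cc_le (H : SimpleGraph V) (L : List V) (hnd : L.Nodup)
    (κ₀ : H.ConnectedComponent) (hmem : ∀ v ∈ L, H.connectedComponentMk v = κ₀) :
    Nat.card H.ConnectedComponent + L.length ≤ Fintype.card V + 1 := by
  have hout : ∀ κ : H.ConnectedComponent, κ ≠ κ₀ → κ.out ∉ L.toFinset := by
    intro κ hκ hmem'
    exact hκ (by rw [← cc_mk_out κ]; exact hmem _ (List.mem_toFinset.mp hmem'))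
  have hinj : Function.Injective (fun κ : H.ConnectedComponent =>
      if h : κ = κ₀ then (none : Option {v : V // v ∉ L.toFinset})
      else some ⟨κ.out, hout κ h⟩) := by
    intro κ κ' h
    dsimp only at h
    by_cases h1 : κ = κ₀
    · rw [dif_pos h1] at h
      by_cases h2 : κ' = κ₀
      · exact h1.trans h2.symm
      · rw [dif_neg h2] at h; exact absurd h (by simp)
    · rw [dif_neg h1] at h
      by_cases h2 : κ' = κ₀
      · rw [dif_pos h2] at h; exact absurd h (by simp)
      · rw [dif_neg h2] at h
        simp only [Option.some.injEq, Subtype.mk.injEq] at h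
        have := congrArg H.connectedComponentMk h
        rwa [cc_mk_out, cc_mk_out] at this
  have hcard := Nat.card_le_card_of_injective _ hinj
  rw [card_option_subtype_notmem] at hcard
  have hlen : L.length ≤ Fintype.card V := hnd.length_le_card
  have : L.toFinset.card = L.length := List.toFinset_card_of_nodup hnd
  omega

lemma card_cc_le₂ (H : SimpleGraph V) (L₁ L₂ : List V) (h₁ : L₁.Nodup) (h₂ : L₂.Nodup)
    (κ₁ κ₂ : H.ConnectedComponent) (hne : κ₁ ≠ κ₂)
    (hm₁ : ∀ v ∈ L₁, H.connectedComponentMk v = κ₁)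
    (hm₂ : ∀ v ∈ L₂, H.connectedComponentMk v = κ₂) :
    Nat.card H.ConnectedComponent + L₁.length + L₂.length ≤ Fintype.card V + 2 := by
  set T : Finset V := L₁.toFinset ∪ L₂.toFinset with hT
  have hdisj : Disjoint L₁.toFinset L₂.toFinset := by
    rw [Finset.disjoint_left]
    intro v hv1 hv2
    exact hne ((hm₁ v (List.mem_toFinset.mp hv1)).symm.trans
      (hm₂ v (List.mem_toFinset.mp hv2)))
  have hTcard : T.card = L₁.length + L₂.length := by
    rw [hT, Finset.card_union_of_disjoint hdisj, List.toFinset_card_of_nodup h₁,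
      List.toFinset_card_of_nodup h₂]
  have hout : ∀ κ : H.ConnectedComponent, κ ≠ κ₁ → κ ≠ κ₂ → κ.out ∉ T := by
    intro κ ha hb hmem'
    rw [hT, Finset.mem_union] at hmem'
    rcases hmem' with h | h
    · exact ha (by rw [← cc_mk_out κ]; exact hm₁ _ (List.mem_toFinset.mp h))
    · exact hb (by rw [← cc_mk_out κ]; exact hm₂ _ (List.mem_toFinset.mp h))
  have hinj : Function.Injective (fun κ : H.ConnectedComponent =>
      if h1 : κ = κ₁ then (none : Option (Option {v : V // v ∉ T}))
      else if h2 : κ = κ₂ then some none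
      else some (some ⟨κ.out, hout κ h1 h2⟩)) := by
    intro κ κ' h
    dsimp only at h
    by_cases b1 : κ = κ₁
    · rw [dif_pos b1] at h
      by_cases c1 : κ' = κ₁
      · exact b1.trans c1.symm
      · rw [dif_neg c1] at h
        by_cases c2 : κ' = κ₂
        · rw [dif_pos c2] at h; exact absurd h (by simp)
        · rw [dif_neg c2] at h; exact absurd h (by simp)
    · rw [dif_neg b1] at h
      by_cases b2 : κ = κ₂
      · rw [dif_pos b2] at h
        by_cases c1 : κ' = κ₁
        · rw [dif_pos c1] at h; exact absurd h (by simp)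
        · rw [dif_neg c1] at h
          by_cases c2 : κ' = κ₂
          · exact b2.trans c2.symm
          · rw [dif_neg c2] at h; exact absurd h (by simp)
      · rw [dif_neg b2] at h
        by_cases c1 : κ' = κ₁
        · rw [dif_pos c1] at h; exact absurd h (by simp)
        · rw [dif_neg c1] at h
          by_cases c2 : κ' = κ₂
          · rw [dif_pos c2] at h; exact absurd h (by simp)
          · rw [dif_neg c2] at h
            simp only [Option.some.injEq, Subtype.mk.injEq] at h
            have := congrArg H.connectedComponentMk h
            rwa [cc_mk_out, cc_mk_out] at this
  have hcard := Nat.card_le_card_of_injective _ hinj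
  have hopt : Nat.card (Option (Option {v : V // v ∉ T})) =
      Fintype.card V - T.card + 1 + 1 := by
    rw [Nat.card_eq_fintype_card, Fintype.card_option, Fintype.card_option,
      Fintype.card_subtype_compl, Fintype.card_coe]
  rw [hopt] at hcard
  have hTle : T.card ≤ Fintype.card V := T.card_le_univ
  omega

lemma card_cc_ge (S : Finset (Sym2 V)) (T : Finset V) (a₀ : V) (ha₀ : a₀ ∈ T)
    (hT : ∀ u v : V, s(u, v) ∈ S → u ∈ T) :
    Fintype.card V + 1 ≤
      Nat.card (fromEdgeSet (S : Set (Sym2 V))).ConnectedComponent + T.card := by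
  set H : SimpleGraph V := fromEdgeSet (S : Set (Sym2 V)) with hH
  have hiso : ∀ v : V, v ∉ T → ∀ w : V, H.Reachable v w → v = w := by
    intro v hv w hr
    obtain ⟨p⟩ := hr
    cases p with
    | nil => rfl
    | cons h q =>
      rw [hH, fromEdgeSet_adj] at h
      exact absurd (hT _ _ (by exact_mod_cast h.1)) hv
  have hinj : Function.Injective (fun o : Option {v : V // v ∉ T} =>
      match o with
      | none => H.connectedComponentMk a₀
      | some v => H.connectedComponentMk v.1) := by
    intro o o' h
    match o, o' with
    | none, none => rfl
    | some v, none =>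
      exact absurd (hiso v.1 v.2 a₀ (ConnectedComponent.eq.mp h) ▸ ha₀) v.2
    | none, some v =>
      exact absurd ((hiso v.1 v.2 a₀ (ConnectedComponent.eq.mp h.symm)).symm ▸ ha₀) v.2
    | some v, some w =>
      exact congrArg some (Subtype.ext (hiso v.1 v.2 w.1 (ConnectedComponent.eq.mp h)))
  have hcard := Nat.card_le_card_of_injective _ hinj
  rw [card_option_subtype_notmem] at hcard
  have hTle : T.card ≤ Fintype.card V := T.card_le_univ
  omega


end P3

section P4
variable {V : Type} {A : Type} [AddCommGroup A] [Fintype V] [DecidableEq V]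


lemma unsolvable_structure (G : SimpleGraph V)
    (S : Finset (Sym2 V)) (hSE : S ⊆ G.edgeFinset)
    (c : V → V → A) (hanti : ∀ u v, c v u = - c u v)
    (htri : ∀ x y z, G.Adj x y → G.Adj y z → G.Adj z x → c x y + c y z + c z x = 0)
    (hunsolv : ¬ ∃ f : V → A, Good S c f) :
    Nat.card (fromEdgeSet (S : Set (Sym2 V))).ConnectedComponent + 3 ≤ Fintype.card V ∧
    (Nat.card (fromEdgeSet (S : Set (Sym2 V))).ConnectedComponent + 3 = Fintype.card V →
      S.card = 4) := by
  set HS : SimpleGraph V := fromEdgeSet (S : Set (Sym2 V)) with hHS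
  have hmemS : ∀ {u v : V}, HS.Adj u v → s(u, v) ∈ S := by
    intro u v h
    rw [hHS, fromEdgeSet_adj] at h
    exact_mod_cast h.1
  have hGadj : ∀ {u v : V}, HS.Adj u v → G.Adj u v := by
    intro u v h
    have := hSE (hmemS h)
    rwa [mem_edgeFinset, mem_edgeSet] at this
  have hdiag : ∀ e ∈ S, ¬ e.IsDiag := by
    intro e he
    exact G.not_isDiag_of_mem_edgeSet (mem_edgeFinset.mp (hSE he))
  have htri' : ∀ x y z, HS.Adj x y → HS.Adj y z → HS.Adj z x →
      c x y + c y z + c z x = 0 := fun x y z h1 h2 h3 =>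
    htri x y z (hGadj h1) (hGadj h2) (hGadj h3)
  -- a bad closed walk exists
  have hbad : ∃ k : ℕ, ∃ (a : V) (p : HS.Walk a a), wsum c p ≠ 0 ∧ p.length = k := by
    by_contra hno
    push_neg at hno
    exact hunsolv (exists_good_of_walks hdiag hanti
      (fun a p => by by_contra hw; exact (hno p.length a p hw) rfl))
  obtain ⟨a, p, hw, hlenfind⟩ := Nat.find_spec hbad
  have hmin : ∀ (x : V) (z : HS.Walk x x), wsum c z ≠ 0 →
      Nat.find hbad ≤ z.length := by
    intro x z hz
    by_contra hlt
    push_neg at hlt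
    exact Nat.find_min hbad hlt ⟨x, z, hz, rfl⟩
  -- length at least 4
  have hge4 : 4 ≤ p.length := by
    by_contra hlt
    push_neg at hlt
    exact hw (wsum_closed_small c hanti htri' p (by omega))
  -- support tail has no duplicates
  have hnodup : p.support.tail.Nodup := by
    by_contra hdup
    obtain ⟨x, z₁, z₂, hsum, hl1, hl2, hl12⟩ := surgery c p hdup
    have : wsum c z₁ ≠ 0 ∨ wsum c z₂ ≠ 0 := by
      by_contra hq
      push_neg at hq
      rw [hq.1, hq.2, add_zero] at hsum
      exact hw hsum.symm
    rcases this with h | h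
    · have := hmin x z₁ h; omega
    · have := hmin x z₂ h; omega
  have hmemL : ∀ v ∈ p.support.tail, HS.connectedComponentMk v =
      HS.connectedComponentMk a := by
    intro v hv
    exact (ConnectedComponent.eq.mpr ⟨p.takeUntil v (List.mem_of_mem_tail hv)⟩).symm
  have hLlen : p.support.tail.length = p.length := by
    rw [List.length_tail, Walk.length_support]
    omega
  have hle := card_cc_le HS p.support.tail hnodup _ hmemL
  rw [hLlen] at hle
  constructor
  · omega
  intro heq
  have hlen4 : p.length = 4 := by omega
  -- every vertex in the component of `a` is on the walk
  have hclaim1 : ∀ v : V, HS.connectedComponentMk v = HS.connectedComponentMk a →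
      v ∈ p.support.tail := by
    intro v hv
    by_contra hvL
    have hle2 := card_cc_le HS (v :: p.support.tail)
      (List.nodup_cons.mpr ⟨hvL, hnodup⟩) (HS.connectedComponentMk a)
      (by intro w hw'
          rcases List.mem_cons.mp hw' with rfl | hw'
          · exact hv
          · exact hmemL w hw')
    simp only [List.length_cons] at hle2
    omega
  -- every edge of S has both endpoints on the walk
  have hclaim2 : ∀ u v : V, s(u, v) ∈ S → u ∈ p.support.tail ∧ v ∈ p.support.tail := by
    intro u v hs
    have hne : u ≠ v := fun h => hdiag _ hs (by simp [h])
    have adj : HS.Adj u v := by rw [hHS, fromEdgeSet_adj]; exact ⟨by exact_mod_cast hs, hne⟩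
    have hmk : HS.connectedComponentMk u = HS.connectedComponentMk v :=
      ConnectedComponent.eq.mpr adj.reachable
    by_cases hca : HS.connectedComponentMk u = HS.connectedComponentMk a
    · exact ⟨hclaim1 u hca, hclaim1 v (hmk ▸ hca)⟩
    · exfalso
      have hle3 := card_cc_le₂ HS p.support.tail [u, v] hnodup
        (by simp [hne]) (HS.connectedComponentMk a) (HS.connectedComponentMk u)
        (fun h => hca h.symm) hmemL
        (by intro w hw'
            rcases List.mem_cons.mp hw' with rfl | hw'
            · rfl
            · simp only [List.mem_singleton] at hw'
              subst hw'
              exact hmk.symm)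
      simp only [List.length_cons, List.length_singleton] at hle3
      omega
  clear hle hclaim1 hmemL hmin hlenfind
  cases p with
  | nil => simp at hlen4
  | cons h₁ q₁ =>
    rename_i x1
    cases q₁ with
    | nil => simp at hlen4
    | cons h₂ q₂ =>
      rename_i x2
      cases q₂ with
      | nil => simp [Walk.length_cons] at hlen4
      | cons h₃ q₃ =>
        rename_i x3
        cases q₃ with
        | nil => simp [Walk.length_cons] at hlen4
        | cons h₄ q₄ =>
          rename_i x4
          cases q₄ with
          | cons h₅ q₅ => simp [Walk.length_cons] at hlen4
          | nil =>
            simp only [Walk.support_cons, Walk.support_nil, List.tail_cons]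
              at hnodup hclaim2
            have hnd := hnodup
            simp only [List.nodup_cons, List.mem_cons, List.mem_singleton,
              List.not_mem_nil, or_false, not_or, List.nodup_nil, and_true] at hnd
            obtain ⟨⟨h12, h13, h1a⟩, ⟨h23, h2a⟩, h3a, -⟩ := hnd
            have g1 : G.Adj a x1 := hGadj h₁
            have g2 : G.Adj x1 x2 := hGadj h₂
            have g3 : G.Adj x2 x3 := hGadj h₃
            have g4 : G.Adj x3 a := hGadj h₄
            have hs1 : s(a, x1) ∈ S := hmemS h₁
            have hs2 : s(x1, x2) ∈ S := hmemS h₂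
            have hs3 : s(x2, x3) ∈ S := hmemS h₃
            have hs4 : s(x3, a) ∈ S := hmemS h₄
            have hwv : c a x1 + (c x1 x2 + (c x2 x3 + (c x3 a + 0))) ≠ 0 := by
              rw [wsum_cons, wsum_cons, wsum_cons, wsum_cons] at hw
              simpa [wsum] using hw
            have hd1 : s(a, x2) ∉ S := by
              intro hmem
              have gax2 : G.Adj a x2 := by
                have := hSE hmem
                rwa [mem_edgeFinset, mem_edgeSet] at this
              have t1 := htri a x1 x2 g1 g2 gax2.symm
              have t2 := htri a x2 x3 gax2 g3 g4
              apply hwv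
              have hre : c a x1 + (c x1 x2 + (c x2 x3 + (c x3 a + 0))) =
                  (c a x1 + c x1 x2 + c x2 a) + (c a x2 + c x2 x3 + c x3 a) := by
                rw [hanti a x2]
                abel
              rw [hre, t1, t2, add_zero]
            have hd2 : s(x1, x3) ∉ S := by
              intro hmem
              have gx13 : G.Adj x1 x3 := by
                have := hSE hmem
                rwa [mem_edgeFinset, mem_edgeSet] at this
              have t1 := htri x1 x2 x3 g2 g3 gx13.symm
              have t2 := htri x3 a x1 g4 g1 gx13
              apply hwv
              have hre : c a x1 + (c x1 x2 + (c x2 x3 + (c x3 a + 0))) =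
                  (c x1 x2 + c x2 x3 + c x3 x1) + (c x3 a + c a x1 + c x1 x3) := by
                rw [hanti x1 x3]
                abel
              rw [hre, t1, t2, add_zero]
            have hsub : S ⊆ ({s(a, x1), s(x1, x2), s(x2, x3), s(x3, a)} :
                Finset (Sym2 V)) := by
              intro e he
              revert he
              refine Sym2.inductionOn e ?_
              intro u v he
              obtain ⟨hu, hv⟩ := hclaim2 u v he
              simp only [List.mem_cons, List.mem_singleton, List.not_mem_nil,
                or_false] at hu hv
              rcases hu with rfl | rfl | rfl | rfl <;> rcases hv with rfl | rfl | rfl | rfl <;>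
                first
                | exact absurd (Sym2.mk_isDiag_iff.mpr rfl) (hdiag _ he)
                | exact absurd he hd1
                | exact absurd he hd2
                | (rw [Sym2.eq_swap] at he;
                   first
                   | exact absurd he hd1
                   | exact absurd he hd2)
                | simp
                | (rw [Sym2.eq_swap]; simp)
            have hsup : ({s(a, x1), s(x1, x2), s(x2, x3), s(x3, a)} :
                Finset (Sym2 V)) ⊆ S := by
              intro e he
              simp only [Finset.mem_insert, Finset.mem_singleton] at he
              rcases he with rfl | rfl | rfl | rfl
              · exact hs1
              · exact hs2
              · exact hs3
              · exact hs4
            rw [Finset.Subset.antisymm hsub hsup]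
            have h21 := Ne.symm h12
            have h31 := Ne.symm h13
            have ha1 := Ne.symm h1a
            have h32 := Ne.symm h23
            have ha2 := Ne.symm h2a
            have ha3 := Ne.symm h3a
            rw [Finset.card_insert_of_notMem (by
                  simp [Sym2.eq_iff, h12, h13, h1a, h23, h2a, h3a, h21, h31, ha1, h32, ha2, ha3]),
                Finset.card_insert_of_notMem (by
                  simp [Sym2.eq_iff, h12, h13, h1a, h23, h2a, h3a, h21, h31, ha1, h32, ha2, ha3]),
                Finset.card_insert_of_notMem (by
                  simp [Sym2.eq_iff, h12, h13, h1a, h23, h2a, h3a, h21, h31, ha1, h32, ha2, ha3]),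
                Finset.card_singleton]


end P4

section P5
variable {V : Type}



variable [Fintype V] [DecidableEq V] {m : ℕ}

noncomputable def MM (S : Finset (Sym2 V)) (c : V → V → ZMod m) : ℕ :=
  Nat.card {f : V → ZMod m // Good S c f}

lemma MM_eq_of_solvable (S : Finset (Sym2 V)) (c : V → V → ZMod m)
    (h : ∃ f, Good S c f) : MM S c = MM S (fun _ _ => (0 : ZMod m)) := by
  obtain ⟨f₀, hf₀⟩ := h
  apply Nat.card_congr
  refine ⟨fun f => ⟨f.1 - f₀, ?_⟩, fun g => ⟨g.1 + f₀, ?_⟩, ?_, ?_⟩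
  · intro u v hs
    have h1 := f.2 u v hs
    have h2 := hf₀ u v hs
    simp only [Pi.sub_apply, h1, h2]
    ring
  · intro u v hs
    have h2 := hf₀ u v hs
    have h1 := g.2 u v hs
    simp only [Pi.add_apply, h1, h2, add_zero]
    ring
  · intro f; apply Subtype.ext; funext v; simp
  · intro g; apply Subtype.ext; funext v; simp

lemma MM_eq_zero_of_unsolvable (S : Finset (Sym2 V)) (c : V → V → ZMod m)
    (h : ¬ ∃ f, Good S c f) : MM S c = 0 := by
  have : IsEmpty {f : V → ZMod m // Good S c f} := ⟨fun f => h ⟨f.1, f.2⟩⟩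
  exact Nat.card_of_isEmpty

lemma MM_zero_eq (S : Finset (Sym2 V)) (hdiag : ∀ e ∈ S, ¬ e.IsDiag) :
    MM S (fun _ _ => (0 : ZMod m)) =
      m ^ Nat.card (fromEdgeSet (S : Set (Sym2 V))).ConnectedComponent := by
  set HS : SimpleGraph V := fromEdgeSet (S : Set (Sym2 V)) with hHS
  have hconst0 : ∀ (f : V → ZMod m), Good S (fun _ _ => (0 : ZMod m)) f →
      ∀ {u v : V} (w : HS.Walk u v), f u = f v := by
    intro f hf u v w
    induction w with
    | nil => rfl
    | cons h q ih =>
      rename_i x y z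
      have hs : s(x, y) ∈ S := by
        rw [hHS, fromEdgeSet_adj] at h
        exact_mod_cast h.1
      have h1 : f y = f x := by
        have := hf x y hs
        rwa [add_zero] at this
      rw [← ih, h1]
  have hconst : ∀ (f : V → ZMod m), Good S (fun _ _ => (0 : ZMod m)) f →
      ∀ {u v : V}, HS.Reachable u v → f u = f v := by
    intro f hf u v hr
    obtain ⟨w⟩ := hr
    exact hconst0 f hf w
  have e : {f : V → ZMod m // Good S (fun _ _ => 0) f} ≃ (HS.ConnectedComponent → ZMod m) := by
    refine ⟨fun f κ => f.1 κ.out, fun g => ⟨fun v => g (HS.connectedComponentMk v), ?_⟩, ?_, ?_⟩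
    · intro u v hs
      have hne : u ≠ v := fun h => hdiag _ hs (by simp [h])
      have adj : HS.Adj u v := by
        rw [hHS, fromEdgeSet_adj]; exact ⟨by exact_mod_cast hs, hne⟩
      dsimp only
      rw [ConnectedComponent.eq.mpr adj.reachable, add_zero]
    · intro f
      apply Subtype.ext; funext v
      exact hconst f.1 f.2 (ConnectedComponent.eq.mp (Quot.out_eq _))
    · intro g
      funext κ
      exact congrArg g (cc_mk_out κ)
  rw [MM, Nat.card_congr e, Nat.card_fun, Nat.card_zmod, Nat.card_eq_fintype_card]

section IE

variable [NeZero m]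

/-- the symmetric violation predicate -/
def vio (c : V → V → ZMod m) (f : V → ZMod m) (e : Sym2 V) : Prop :=
  ∀ u v : V, e = s(u, v) → f v = f u + c u v

lemma vio_mk {c : V → V → ZMod m} (hanti : ∀ u v, c v u = - c u v)
    {f : V → ZMod m} {u v : V} : vio c f s(u, v) ↔ f v = f u + c u v := by
  constructor
  · exact fun h => h u v rfl
  · intro hfv u' v' he
    rcases Sym2.eq_iff.mp he with ⟨rfl, rfl⟩ | ⟨rfl, rfl⟩
    · exact hfv
    · rw [hanti, hfv]; ring
 
lemma good_iff {S : Finset (Sym2 V)} {c : V → V → ZMod m}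
    (hanti : ∀ u v, c v u = - c u v) {f : V → ZMod m} :
    (∀ e ∈ S, vio c f e) ↔ Good S c f := by
  constructor
  · exact fun h u v hs => (h _ hs) u v rfl
  · intro hg e he
    revert he
    refine Sym2.inductionOn e ?_
    intro u v he
    exact (vio_mk hanti).mpr (hg u v he)

lemma sum_prod_vio (S : Finset (Sym2 V)) (c : V → V → ZMod m)
    (hanti : ∀ u v, c v u = - c u v) :
    (∑ f : V → ZMod m, ∏ e ∈ S, (if vio c f e then (1 : ℤ) else 0)) = (MM S c : ℤ) := by
  have h1 : ∀ f : V → ZMod m, (∏ e ∈ S, (if vio c f e then (1 : ℤ) else 0)) =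
      if Good S c f then 1 else 0 := by
    intro f
    rw [Finset.prod_boole]
    by_cases h : Good S c f
    · rw [if_pos ((good_iff hanti).mpr h), if_pos h]
    · rw [if_neg (fun hh => h ((good_iff hanti).mp hh)), if_neg h]
  rw [Finset.sum_congr rfl (fun f _ => h1 f), Finset.sum_boole]
  norm_cast
  rw [MM, Nat.card_eq_fintype_card, Fintype.card_subtype]

lemma incl_excl (G : SimpleGraph V) (c : V → V → ZMod m)
    (hanti : ∀ u v, c v u = - c u v) :
    ((Nat.card {f : V → ZMod m // ∀ u v : V, G.Adj u v → f v ≠ f u + c u v}) : ℤ) =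
      ∑ S ∈ G.edgeFinset.powerset, (-1) ^ S.card * (MM S c : ℤ) := by
  have step1 : ((Nat.card {f : V → ZMod m // ∀ u v : V, G.Adj u v → f v ≠ f u + c u v}) : ℤ)
      = ∑ f : V → ZMod m, ∏ e ∈ G.edgeFinset, ((1 : ℤ) - if vio c f e then 1 else 0) := by
    have h1 : ∀ f : V → ZMod m,
        (∏ e ∈ G.edgeFinset, ((1 : ℤ) - if vio c f e then 1 else 0)) =
        if (∀ u v : V, G.Adj u v → f v ≠ f u + c u v) then 1 else 0 := by
      intro f
      have h2 : (∏ e ∈ G.edgeFinset, ((1 : ℤ) - if vio c f e then 1 else 0)) =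
          ∏ e ∈ G.edgeFinset, (if ¬ vio c f e then (1 : ℤ) else 0) := by
        refine Finset.prod_congr rfl fun e _ => ?_
        by_cases h : vio c f e <;> simp [h]
      rw [h2, Finset.prod_boole]
      have h3 : (∀ e ∈ G.edgeFinset, ¬ vio c f e) ↔
          (∀ u v : V, G.Adj u v → f v ≠ f u + c u v) := by
        constructor
        · intro h u v hadj hviol
          exact h s(u, v) (mem_edgeFinset.mpr (G.mem_edgeSet.mpr hadj))
            ((vio_mk hanti).mpr hviol)
        · intro h e he
          revert he
          refine Sym2.inductionOn e ?_
          intro u v he hv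
          exact h u v (G.mem_edgeSet.mp (mem_edgeFinset.mp he)) ((vio_mk hanti).mp hv)
      simp only [h3]
    rw [Finset.sum_congr rfl (fun f _ => h1 f), Finset.sum_boole]
    norm_cast
    rw [Nat.card_eq_fintype_card, Fintype.card_subtype]
  rw [step1]
  have step2 : ∀ f : V → ZMod m,
      (∏ e ∈ G.edgeFinset, ((1 : ℤ) - if vio c f e then 1 else 0)) =
      ∑ S ∈ G.edgeFinset.powerset,
        (-1) ^ S.card * ∏ e ∈ S, (if vio c f e then (1 : ℤ) else 0) := by
    intro f
    have h4 : (∏ e ∈ G.edgeFinset, ((1 : ℤ) - if vio c f e then 1 else 0)) =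
        ∏ e ∈ G.edgeFinset, ((- if vio c f e then (1 : ℤ) else 0) + 1) := by
      refine Finset.prod_congr rfl fun e _ => by ring
    rw [h4, Finset.prod_add]
    refine Finset.sum_congr rfl fun S hS => ?_
    rw [Finset.prod_const_one, mul_one]
    have h5 : (∏ e ∈ S, (- if vio c f e then (1 : ℤ) else 0)) =
        ∏ e ∈ S, ((-1) * if vio c f e then (1 : ℤ) else 0) := by
      refine Finset.prod_congr rfl fun e _ => by ring
    rw [h5, Finset.prod_mul_distrib, Finset.prod_const]
  rw [Finset.sum_congr rfl (fun f _ => step2 f), Finset.sum_comm]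
  refine Finset.sum_congr rfl fun S hS => ?_
  rw [← Finset.mul_sum, sum_prod_vio S c hanti]

lemma count_diff (G : SimpleGraph V) (c : V → V → ZMod m)
    (hanti : ∀ u v, c v u = - c u v) :
    ((Nat.card {f : V → ZMod m // ∀ u v : V, G.Adj u v → f v ≠ f u}) : ℤ) -
      ((Nat.card {f : V → ZMod m // ∀ u v : V, G.Adj u v → f v ≠ f u + c u v}) : ℤ) =
      ∑ S ∈ G.edgeFinset.powerset.filter (fun S => ¬ ∃ f : V → ZMod m, Good S c f),
        (-1) ^ S.card *
          ((m : ℤ) ^ Nat.card (fromEdgeSet (S : Set (Sym2 V))).ConnectedComponent) := by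
  have h0 : ((Nat.card {f : V → ZMod m // ∀ u v : V, G.Adj u v → f v ≠ f u}) : ℤ) =
      ∑ S ∈ G.edgeFinset.powerset, (-1) ^ S.card * (MM S (fun _ _ => (0 : ZMod m)) : ℤ) := by
    have := incl_excl G (fun _ _ => (0 : ZMod m)) (fun u v => by simp)
    simpa using this
  rw [h0, incl_excl G c hanti, ← Finset.sum_sub_distrib]
  rw [Finset.sum_filter]
  refine Finset.sum_congr rfl fun S hS => ?_
  have hdiag : ∀ e ∈ S, ¬ e.IsDiag := fun e he =>
    G.not_isDiag_of_mem_edgeSet (mem_edgeFinset.mp (Finset.mem_powerset.mp hS he))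
  by_cases h : ∃ f : V → ZMod m, Good S c f
  · rw [if_neg (not_not_intro h), MM_eq_of_solvable S c h]
    ring
  · rw [if_pos h, MM_eq_zero_of_unsolvable S c h, MM_zero_eq S hdiag]
    push_cast
    ring

end IE

end P5

section P6
variable {V : Type}


lemma setGirth_le' (G : SimpleGraph V) (E₀ : Set (Sym2 V)) {a : V} (p : G.Walk a a)
    (hc : p.IsCycle) (ho : Odd (p.edges.countP (fun e => e ∈ E₀))) :
    setGirth G E₀ ≤ (p.length : ℕ∞) :=
  iInf_le_of_le a (iInf_le_of_le p (iInf_le_of_le hc (iInf_le _ ho)))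

lemma exists_cycle_of_setGirth_four (G : SimpleGraph V) (E₀ : Set (Sym2 V))
    (hr : setGirth G E₀ = 4) :
    ∃ (a : V) (p : G.Walk a a), p.IsCycle ∧
      Odd (p.edges.countP (fun e => e ∈ E₀)) ∧ p.length = 4 := by
  by_contra hno
  push_neg at hno
  have h5 : (5 : ℕ∞) ≤ setGirth G E₀ := by
    rw [setGirth]
    refine le_iInf fun a => le_iInf fun p => le_iInf fun hc => le_iInf fun ho => ?_
    have h4 : (4 : ℕ∞) ≤ (p.length : ℕ∞) := hr ▸ setGirth_le' G E₀ p hc ho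
    have h4' : 4 ≤ p.length := by exact_mod_cast h4
    have hne := hno a p hc ho
    have h5' : 5 ≤ p.length := by omega
    exact_mod_cast h5'
  rw [hr] at h5
  have : (5 : ℕ) ≤ 4 := by exact_mod_cast h5
  omega

lemma triangle_not_odd (G : SimpleGraph V) (E₀ : Set (Sym2 V))
    (hr : setGirth G E₀ = 4) {x y z : V}
    (hxy : G.Adj x y) (hyz : G.Adj y z) (hzx : G.Adj z x) :
    ¬ Odd (List.countP (fun e => decide (e ∈ E₀)) [s(x, y), s(y, z), s(z, x)]) := by
  intro ho
  set p : G.Walk x x := Walk.cons hxy (Walk.cons hyz (Walk.cons hzx Walk.nil)) with hp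
  have hedges : p.edges = [s(x, y), s(y, z), s(z, x)] := by
    simp [hp, Walk.edges_cons]
  have hcyc : p.IsCycle := by
    rw [hp, Walk.cons_isCycle_iff]
    constructor
    · rw [Walk.isPath_def]
      simp [Walk.support_cons, hyz.ne, hzx.ne, hzx.ne', hxy.ne']
    · simp only [Walk.edges_cons, Walk.edges_nil, List.mem_cons, List.not_mem_nil, or_false]
      push_neg
      constructor
      · intro h
        rcases Sym2.eq_iff.mp h with ⟨h1, h2⟩ | ⟨h1, h2⟩
        · exact hxy.ne h1
        · exact hzx.ne' h1
      · intro h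
        rcases Sym2.eq_iff.mp h with ⟨h1, h2⟩ | ⟨h1, h2⟩
        · exact hzx.ne' h1
        · exact hyz.ne h2
  have hle := setGirth_le' G E₀ p hcyc (by rw [hedges]; exact ho)
  have hlen : p.length = 3 := by simp [hp]
  rw [hr, hlen] at hle
  have : (4 : ℕ) ≤ 3 := by exact_mod_cast hle
  omega

section CZ
variable (V₁ V₂ : Set V) (Estar : Set (Sym2 V))

noncomputable def cZ : V → V → ℤ :=
  fun u v => if s(u, v) ∈ Estar then (if u ∈ V₁ then 1 else -1) else 0

variable {V₁ V₂ Estar}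

lemma cZ_side (hdisj : Disjoint V₁ V₂)
    (hbtw : ∀ e ∈ Estar, ∃ u ∈ V₁, ∃ v ∈ V₂, e = s(u, v))
    {u v : V} (h : s(u, v) ∈ Estar) :
    (u ∈ V₁ ∧ v ∉ V₁) ∨ (v ∈ V₁ ∧ u ∉ V₁) := by
  obtain ⟨a, ha, b, hb, he⟩ := hbtw _ h
  rcases Sym2.eq_iff.mp he.symm with ⟨rfl, rfl⟩ | ⟨rfl, rfl⟩
  · exact Or.inl ⟨ha, fun hv => (Set.disjoint_left.mp hdisj hv) hb⟩
  · exact Or.inr ⟨ha, fun hu => (Set.disjoint_left.mp hdisj hu) hb⟩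

lemma cZ_antisymm (hdisj : Disjoint V₁ V₂)
    (hbtw : ∀ e ∈ Estar, ∃ u ∈ V₁, ∃ v ∈ V₂, e = s(u, v)) :
    ∀ u v : V, cZ V₁ Estar v u = - cZ V₁ Estar u v := by
  intro u v
  by_cases h : s(u, v) ∈ Estar
  · have h' : s(v, u) ∈ Estar := by rwa [Sym2.eq_swap]
    rcases cZ_side hdisj hbtw h with ⟨h1, h2⟩ | ⟨h1, h2⟩
    · simp [cZ, h, h', h1, h2]
    · simp [cZ, h, h', h1, h2]
  · have h' : s(v, u) ∉ Estar := by rwa [Sym2.eq_swap]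
    simp [cZ, h, h']

lemma cZ_triangle (G : SimpleGraph V) (hdisj : Disjoint V₁ V₂)
    (hbtw : ∀ e ∈ Estar, ∃ u ∈ V₁, ∃ v ∈ V₂, e = s(u, v))
    (hr : setGirth G Estar = 4) {x y z : V}
    (hxy : G.Adj x y) (hyz : G.Adj y z) (hzx : G.Adj z x) :
    cZ V₁ Estar x y + cZ V₁ Estar y z + cZ V₁ Estar z x = 0 := by
  by_cases e1 : s(x, y) ∈ Estar <;> by_cases e2 : s(y, z) ∈ Estar <;>
    by_cases e3 : s(z, x) ∈ Estar
  · -- 3 edges: odd, contradiction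
    exfalso
    apply triangle_not_odd G Estar hr hxy hyz hzx
    have : List.countP (fun e => decide (e ∈ Estar)) [s(x, y), s(y, z), s(z, x)] = 3 := by
      simp [e1, e2, e3]
    rw [this]; exact ⟨1, rfl⟩
  · rcases cZ_side hdisj hbtw e1 with ⟨hx1, hy1⟩ | ⟨hy1, hx1⟩ <;>
      rcases cZ_side hdisj hbtw e2 with ⟨hy2, hz2⟩ | ⟨hz2, hy2⟩ <;>
      first
        | exact absurd hy2 hy1
        | exact absurd hy1 hy2
        | (simp [cZ, e1, e2, e3, hx1, hy1, hy2, hz2])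
  · rcases cZ_side hdisj hbtw e1 with ⟨hx1, hy1⟩ | ⟨hy1, hx1⟩ <;>
      rcases cZ_side hdisj hbtw e3 with ⟨hz3, hx3⟩ | ⟨hx3, hz3⟩ <;>
      first
        | exact absurd hx1 hx3
        | exact absurd hx3 hx1
        | (simp [cZ, e1, e2, e3, hx1, hy1, hx3, hz3])
  · -- only e1
    exfalso
    apply triangle_not_odd G Estar hr hxy hyz hzx
    have : List.countP (fun e => decide (e ∈ Estar)) [s(x, y), s(y, z), s(z, x)] = 1 := by
      simp [e1, e2, e3]
    rw [this]; exact ⟨0, rfl⟩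
  · rcases cZ_side hdisj hbtw e2 with ⟨hy2, hz2⟩ | ⟨hz2, hy2⟩ <;>
      rcases cZ_side hdisj hbtw e3 with ⟨hz3, hx3⟩ | ⟨hx3, hz3⟩ <;>
      first
        | exact absurd hz2 hz3
        | exact absurd hz3 hz2
        | (simp [cZ, e1, e2, e3, hy2, hz2, hx3, hz3])
  · exfalso
    apply triangle_not_odd G Estar hr hxy hyz hzx
    have : List.countP (fun e => decide (e ∈ Estar)) [s(x, y), s(y, z), s(z, x)] = 1 := by
      simp [e1, e2, e3]
    rw [this]; exact ⟨0, rfl⟩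
  · exfalso
    apply triangle_not_odd G Estar hr hxy hyz hzx
    have : List.countP (fun e => decide (e ∈ Estar)) [s(x, y), s(y, z), s(z, x)] = 1 := by
      simp [e1, e2, e3]
    rw [this]; exact ⟨0, rfl⟩
  · simp [cZ, e1, e2, e3]

lemma sum_parity {G : SimpleGraph V} (l : List G.Dart) :
    ∃ k : ℤ, (l.map (fun d => cZ V₁ Estar d.fst d.snd)).sum =
      (l.countP (fun d => decide (d.edge ∈ Estar)) : ℤ) + 2 * k := by
  induction l with
  | nil => exact ⟨0, by simp⟩
  | cons d l ih =>
    obtain ⟨k, hk⟩ := ih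
    have hedge : d.edge = s(d.fst, d.snd) := rfl
    by_cases h : d.edge ∈ Estar
    · have hmem : s(d.fst, d.snd) ∈ Estar := hedge ▸ h
      by_cases hs : d.fst ∈ V₁
      · refine ⟨k, ?_⟩
        rw [List.map_cons, List.sum_cons,
          List.countP_cons_of_pos (p := fun d : G.Dart => decide (d.edge ∈ Estar)) (by simpa using h), hk]
        have hv : cZ V₁ Estar d.fst d.snd = 1 := by simp [cZ, hmem, hs]
        rw [hv]
        push_cast
        ring
      · refine ⟨k - 1, ?_⟩
        rw [List.map_cons, List.sum_cons,
          List.countP_cons_of_pos (p := fun d : G.Dart => decide (d.edge ∈ Estar)) (by simpa using h), hk]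
        have hv : cZ V₁ Estar d.fst d.snd = -1 := by simp [cZ, hmem, hs]
        rw [hv]
        push_cast
        ring
    · have hmem : s(d.fst, d.snd) ∉ Estar := hedge ▸ h
      refine ⟨k, ?_⟩
      rw [List.map_cons, List.sum_cons,
        List.countP_cons_of_neg (p := fun d : G.Dart => decide (d.edge ∈ Estar)) (by simpa using h), hk]
      have hv : cZ V₁ Estar d.fst d.snd = 0 := by simp [cZ, hmem]
      rw [hv]
      push_cast
      ring

lemma sum_bound {G : SimpleGraph V} (l : List G.Dart) :
    |(l.map (fun d => cZ V₁ Estar d.fst d.snd)).sum| ≤ (l.length : ℤ) := by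
  induction l with
  | nil => simp
  | cons d l ih =>
    simp only [List.map_cons, List.sum_cons, List.length_cons]
    have h1 : |cZ V₁ Estar d.fst d.snd| ≤ 1 := by
      unfold cZ
      split_ifs <;> simp
    calc |cZ V₁ Estar d.fst d.snd + (l.map (fun d => cZ V₁ Estar d.fst d.snd)).sum|
        ≤ |cZ V₁ Estar d.fst d.snd| + |(l.map (fun d => cZ V₁ Estar d.fst d.snd)).sum| :=
          abs_add_le _ _
      _ ≤ 1 + l.length := add_le_add h1 ih
      _ = (l.length : ℤ) + 1 := by ring
      _ ≤ _ := by push_cast; omega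

end CZ


lemma telescope {A : Type} [AddCommGroup A] {G : SimpleGraph V} {S₀ : Finset (Sym2 V)}
    (f : V → A) (c : V → V → A) (hf : Good S₀ c f) {u v : V} (p : G.Walk u v)
    (hp : ∀ e ∈ p.edges, e ∈ S₀) :
    (p.darts.map fun d => c d.fst d.snd).sum = f v - f u := by
  induction p with
  | nil => simp
  | cons h q ih =>
    rename_i x y z
    have hs : s(x, y) ∈ S₀ := hp _ (by rw [Walk.edges_cons]; exact List.mem_cons_self)
    have hrest : ∀ e ∈ q.edges, e ∈ S₀ := fun e he =>
      hp e (by rw [Walk.edges_cons]; exact List.mem_cons_of_mem _ he)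
    simp only [Walk.darts_cons, List.map_cons, List.sum_cons, ih hrest]
    have := hf x y hs
    rw [this]
    abel

lemma mem_tail_of_edge {G : SimpleGraph V} {a : V} (p : G.Walk a a) {u v : V}
    (he : s(u, v) ∈ p.edges) : u ∈ p.support.tail := by
  cases p with
  | nil => simp at he
  | cons h q =>
    have hu : u ∈ (Walk.cons h q).support := Walk.fst_mem_support_of_mem_edges _ he
    rw [Walk.support_cons] at hu ⊢
    rw [List.tail_cons]
    rcases List.mem_cons.mp hu with rfl | h'
    · exact q.end_mem_support
    · exact h'

lemma end_mem_tail {G : SimpleGraph V} {a : V} (p : G.Walk a a) (hlen : p.length ≠ 0) :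
    a ∈ p.support.tail := by
  cases p with
  | nil => simp at hlen
  | cons h q =>
    rw [Walk.support_cons, List.tail_cons]
    exact q.end_mem_support


end P6

section P7
variable {V : Type} [Fintype V] [DecidableEq V]

lemma main_estimate {m : ℕ} [NeZero m] (G : SimpleGraph V) (c : V → V → ZMod m)
    (hanti : ∀ u v : V, c v u = - c u v)
    (hstr : ∀ S ∈ G.edgeFinset.powerset.filter
        (fun S => ¬ ∃ f : V → ZMod m, Good S c f),
      Nat.card (fromEdgeSet (S : Set (Sym2 V))).ConnectedComponent + 3 ≤ Fintype.card V ∧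
      (Nat.card (fromEdgeSet (S : Set (Sym2 V))).ConnectedComponent + 3 = Fintype.card V →
        S.card = 4))
    (S₀ : Finset (Sym2 V))
    (hS₀ : S₀ ∈ G.edgeFinset.powerset.filter
        (fun S => ¬ ∃ f : V → ZMod m, Good S c f))
    (hS₀c : Nat.card (fromEdgeSet (S₀ : Set (Sym2 V))).ConnectedComponent + 3 =
      Fintype.card V)
    (hm : 2 ^ G.edgeFinset.card + 6 ≤ m) :
    Nat.card {f : V → ZMod m // ∀ u v : V, G.Adj u v → f v ≠ f u + c u v} <
      Nat.card {f : V → ZMod m // ∀ u v : V, G.Adj u v → f v ≠ f u} := by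
  classical
  set n : ℕ := Fintype.card V with hn
  set q : ℕ := G.edgeFinset.card with hq
  set K := G.edgeFinset.powerset.filter
    (fun S => ¬ ∃ f : V → ZMod m, Good S c f) with hK
  -- small arithmetic facts first (omega must not see sum hypotheses)
  have h2q1 : 1 ≤ 2 ^ q := Nat.one_le_two_pow
  have hm5 : 5 ≤ m := by omega
  have h3n : 3 ≤ n := by omega
  have hNEV : Nonempty V := by
    rw [← Fintype.card_pos_iff]
    omega
  have hcpos : 0 < Nat.card (fromEdgeSet (S₀ : Set (Sym2 V))).ConnectedComponent := by
    haveI : Nonempty (fromEdgeSet (S₀ : Set (Sym2 V))).ConnectedComponent :=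
      ⟨(fromEdgeSet (S₀ : Set (Sym2 V))).connectedComponentMk (Classical.arbitrary V)⟩
    exact Nat.card_pos
  have hn4 : 4 ≤ n := by omega
  have hmZpos : (0 : ℤ) < (m : ℤ) := by exact_mod_cast (by omega : 0 < m)
  have h1m : (1 : ℤ) ≤ (m : ℤ) := by exact_mod_cast (by omega : 1 ≤ m)
  have h2qm : (2 ^ q : ℤ) + 1 ≤ (m : ℤ) := by exact_mod_cast (by omega : 2 ^ q + 1 ≤ m)
  have hppos4 : (0 : ℤ) < (m : ℤ) ^ (n - 4) := pow_pos hmZpos _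
  have hnsplit : (m : ℤ) ^ (n - 3) = (m : ℤ) ^ (n - 4) * m := by
    rw [← pow_succ]
    congr 1
    omega
  set P : Finset (Sym2 V) → Prop := fun S =>
    Nat.card (fromEdgeSet (S : Set (Sym2 V))).ConnectedComponent + 3 = n with hPdef
  set F : Finset (Sym2 V) → ℤ := fun S => (-1 : ℤ) ^ S.card *
    ((m : ℤ) ^ Nat.card (fromEdgeSet (S : Set (Sym2 V))).ConnectedComponent) with hF
  have hK₁val : ∀ S ∈ K.filter P, F S = (m : ℤ) ^ (n - 3) := by
    intro S hS
    rw [Finset.mem_filter] at hS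
    have h4 := (hstr S hS.1).2 hS.2
    have hcv : Nat.card (fromEdgeSet (S : Set (Sym2 V))).ConnectedComponent = n - 3 := by
      have h5 := hS.2
      rw [hPdef] at h5
      omega
    simp only [hF, h4, hcv]
    norm_num
  have hbd : ∀ S ∈ K.filter (fun S => ¬ P S), -((m : ℤ) ^ (n - 4)) ≤ F S := by
    intro S hS
    rw [Finset.mem_filter] at hS
    have h1 := (hstr S hS.1).1
    have h2 : Nat.card (fromEdgeSet (S : Set (Sym2 V))).ConnectedComponent ≤ n - 4 := by
      have hne := hS.2
      rw [hPdef] at hne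
      omega
    have hpow : (m : ℤ) ^ Nat.card (fromEdgeSet (S : Set (Sym2 V))).ConnectedComponent ≤
        (m : ℤ) ^ (n - 4) := pow_le_pow_right₀ h1m h2
    have hnn : (0 : ℤ) ≤
        (m : ℤ) ^ Nat.card (fromEdgeSet (S : Set (Sym2 V))).ConnectedComponent :=
      le_of_lt (pow_pos hmZpos _)
    simp only [hF]
    rcases Nat.even_or_odd S.card with he | ho
    · rw [he.neg_one_pow, one_mul]
      linarith
    · rw [ho.neg_one_pow, neg_one_mul]
      exact neg_le_neg hpow
  have hcard2 : ((K.filter (fun S => ¬ P S)).card : ℤ) ≤ (2 ^ q : ℤ) := by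
    have hsub : K.filter (fun S => ¬ P S) ⊆ G.edgeFinset.powerset :=
      (Finset.filter_subset _ _).trans (by rw [hK]; exact Finset.filter_subset _ _)
    have hcc := Finset.card_le_card hsub
    rw [Finset.card_powerset, ← hq] at hcc
    exact_mod_cast hcc
  have hkey2 : (2 ^ q : ℤ) * (m : ℤ) ^ (n - 4) + (m : ℤ) ^ (n - 4) ≤ (m : ℤ) ^ (n - 3) := by
    rw [hnsplit]
    nlinarith
  -- now the sum estimates
  have hsum₂ : -((2 ^ q : ℤ) * (m : ℤ) ^ (n - 4)) ≤
      ∑ S ∈ K.filter (fun S => ¬ P S), F S := by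
    have hs := Finset.sum_le_sum hbd
    rw [Finset.sum_const, nsmul_eq_mul] at hs
    have : -((2 ^ q : ℤ) * (m : ℤ) ^ (n - 4)) ≤
        ((K.filter (fun S => ¬ P S)).card : ℤ) * (-((m : ℤ) ^ (n - 4))) := by
      nlinarith
    linarith
  have hsum₁ : (m : ℤ) ^ (n - 3) ≤ ∑ S ∈ K.filter P, F S := by
    rw [Finset.sum_congr rfl hK₁val, Finset.sum_const, nsmul_eq_mul]
    have hcard1 : 1 ≤ ((K.filter P).card : ℤ) := by
      have h0 : 0 < (K.filter P).card := Finset.card_pos.mpr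
        ⟨S₀, Finset.mem_filter.mpr ⟨hS₀, hS₀c⟩⟩
      exact_mod_cast h0
    have hpp : (0 : ℤ) ≤ (m : ℤ) ^ (n - 3) := le_of_lt (pow_pos hmZpos _)
    nlinarith
  have hdiff := count_diff G c hanti
  have hpos : (0 : ℤ) <
      ((Nat.card {f : V → ZMod m // ∀ u v : V, G.Adj u v → f v ≠ f u}) : ℤ) -
      ((Nat.card {f : V → ZMod m // ∀ u v : V, G.Adj u v → f v ≠ f u + c u v}) : ℤ) := by
    rw [hdiff]
    have hshow : ∑ S ∈ G.edgeFinset.powerset.filter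
        (fun S => ¬ ∃ f : V → ZMod m, Good S c f),
        (-1 : ℤ) ^ S.card *
          ((m : ℤ) ^ Nat.card (fromEdgeSet (S : Set (Sym2 V))).ConnectedComponent) =
        ∑ S ∈ K.filter P, F S + ∑ S ∈ K.filter (fun S => ¬ P S), F S := by
      rw [Finset.sum_filter_add_sum_filter_not K P F]
    rw [hshow]
    linarith
  have := sub_pos.mp hpos
  exact_mod_cast this

end P7

end DPAux

/-- if `E*` is a set of edges between two disjoint vertex subsets and
`g_G(E*) = 4`, then `G ∈ DP_<`. -/
theorem mem_DPlt_of_setGirth_four {V : Type} [Fintype V] [DecidableEq V]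
    (G : SimpleGraph V) (V₁ V₂ : Set V) (hdisj : Disjoint V₁ V₂)
    (Estar : Set (Sym2 V)) (hE : Estar ⊆ G.edgeSet)
    (hbtw : ∀ e ∈ Estar, ∃ u ∈ V₁, ∃ v ∈ V₂, e = s(u, v))
    (hr : setGirth G Estar = (4 : ℕ∞)) :
    ∃ M : ℕ, ∀ m : ℕ, M ≤ m → PDP G m < properCount G m := by
  classical
  obtain ⟨a, C, hcyc, hodd, hlen4⟩ := DPAux.exists_cycle_of_setGirth_four G Estar hr
  set q : ℕ := G.edgeFinset.card with hq
  set n : ℕ := Fintype.card V with hn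
  refine ⟨2 ^ q + 6, fun m hm => ?_⟩
  have h2q1 : 1 ≤ 2 ^ q := Nat.one_le_two_pow
  have hm5 : 5 ≤ m := by omega
  haveI : NeZero m := ⟨by omega⟩
  -- integer weights and their ZMod version
  set cz : V → V → ℤ := DPAux.cZ V₁ Estar with hcz
  have hantiZ : ∀ u v : V, cz v u = - cz u v := DPAux.cZ_antisymm hdisj hbtw
  have htriZ : ∀ x y z : V, G.Adj x y → G.Adj y z → G.Adj z x →
      cz x y + cz y z + cz z x = 0 :=
    fun x y z h1 h2 h3 => DPAux.cZ_triangle G hdisj hbtw hr h1 h2 h3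
  set c : V → V → ZMod m := fun u v => ((cz u v : ℤ) : ZMod m) with hc
  have hanti : ∀ u v : V, c v u = - c u v := by
    intro u v
    show ((cz v u : ℤ) : ZMod m) = - ((cz u v : ℤ) : ZMod m)
    rw [hantiZ]
    push_cast
    ring
  have htri : ∀ x y z : V, G.Adj x y → G.Adj y z → G.Adj z x →
      c x y + c y z + c z x = 0 := by
    intro x y z h1 h2 h3
    show ((cz x y : ℤ) : ZMod m) + ((cz y z : ℤ) : ZMod m) + ((cz z x : ℤ) : ZMod m) = 0
    rw [← Int.cast_add, ← Int.cast_add, htriZ x y z h1 h2 h3, Int.cast_zero]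
  -- the color bijection
  set eqv : Fin m → ZMod m := fun i => ((i : Fin m).1 : ZMod m) with heqv
  have hinj : Function.Injective eqv := by
    intro i j h
    have h2 : ((i.1 : ZMod m)).val = ((j.1 : ZMod m)).val := by
      show (eqv i).val = (eqv j).val
      rw [h]
    rw [ZMod.val_cast_of_lt i.2, ZMod.val_cast_of_lt j.2] at h2
    exact Fin.ext h2
  have hsurj : Function.Surjective eqv := fun x =>
    ⟨⟨x.val, ZMod.val_lt x⟩, ZMod.natCast_rightInverse x⟩
  set E : Fin m ≃ ZMod m := Equiv.ofBijective eqv ⟨hinj, hsurj⟩ with hE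
  -- the twisted cover
  set H : SimpleGraph (V × Fin m) :=
    { Adj := fun x y => (x.1 = y.1 ∧ x.2 ≠ y.2) ∨
        (G.Adj x.1 y.1 ∧ eqv y.2 = eqv x.2 + c x.1 y.1),
      symm := by
        constructor
        rintro ⟨u, i⟩ ⟨v, j⟩ (⟨h1, h2⟩ | ⟨h1, h2⟩)
        · exact Or.inl ⟨h1.symm, h2.symm⟩
        · refine Or.inr ⟨h1.symm, ?_⟩
          simp only at h2 ⊢
          rw [h2, hanti]
          ring
      loopless := by
        constructor
        rintro ⟨u, i⟩ (⟨h1, h2⟩ | ⟨h1, h2⟩)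
        · exact h2 rfl
        · exact G.loopless.irrefl u h1 } with hH
  have hHadj : ∀ (u v : V) (i j : Fin m), H.Adj (u, i) (v, j) ↔
      ((u = v ∧ i ≠ j) ∨ (G.Adj u v ∧ eqv j = eqv i + c u v)) := fun u v i j => Iff.rfl
  have hcover : IsCover G m H := by
    refine ⟨?_, ?_, ?_⟩
    · intro u i j hij
      exact Or.inl ⟨rfl, hij⟩
    · intro u v i j huv hadj
      rcases (hHadj u v i j).mp hadj with ⟨h1, _⟩ | ⟨h1, _⟩
      · exact absurd h1 huv
      · exact h1
    · intro u v i j j' huv h1 h2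
      rcases (hHadj u v i j).mp h1 with ⟨he, _⟩ | ⟨_, he1⟩
      · exact absurd he huv
      rcases (hHadj u v i j').mp h2 with ⟨he, _⟩ | ⟨_, he2⟩
      · exact absurd he huv
      · exact hinj (he1.trans he2.symm)
  have hPDP : PDP G m ≤ coverCount H := Nat.sInf_le ⟨H, hcover, rfl⟩
  -- identify the two counts
  have hproper : properCount G m =
      Nat.card {f : V → ZMod m // ∀ u v : V, G.Adj u v → f v ≠ f u} := by
    rw [properCount]
    apply Nat.card_congr
    refine ⟨fun f => ⟨fun v => eqv (f.1 v), ?_⟩, fun g => ⟨fun v => E.symm (g.1 v), ?_⟩, ?_, ?_⟩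
    · intro u v hadj heq
      exact f.2 u v hadj (hinj heq).symm
    · intro u v hadj heq
      have h3 := congrArg E heq
      rw [Equiv.apply_symm_apply, Equiv.apply_symm_apply] at h3
      exact g.2 u v hadj h3.symm
    · intro f
      apply Subtype.ext; funext v
      exact E.symm_apply_apply _
    · intro g
      apply Subtype.ext; funext v
      exact E.apply_symm_apply _
  have hEsymm : ∀ x : ZMod m, eqv (E.symm x) = x := fun x => E.apply_symm_apply x
  have hcovercount : coverCount H =
      Nat.card {f : V → ZMod m // ∀ u v : V, G.Adj u v → f v ≠ f u + c u v} := by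
    rw [coverCount]
    apply Nat.card_congr
    refine ⟨fun f => ⟨fun v => eqv (f.1 v), ?_⟩, fun g => ⟨fun v => E.symm (g.1 v), ?_⟩, ?_, ?_⟩
    · intro u v hadj heq
      exact f.2 u v ((hHadj u v (f.1 u) (f.1 v)).mpr (Or.inr ⟨hadj, heq⟩))
    · intro u v hadj
      rcases (hHadj u v _ _).mp hadj with ⟨h1, h2⟩ | ⟨h1, h2⟩
      · exact h2 (by rw [h1])
      · rw [hEsymm, hEsymm] at h2
        exact g.2 u v h1 h2
    · intro f
      apply Subtype.ext; funext v
      exact E.symm_apply_apply _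
    · intro g
      apply Subtype.ext; funext v
      exact E.apply_symm_apply _
  -- the special 4-cycle constraint set
  set S₀ : Finset (Sym2 V) := C.edges.toFinset with hS₀
  have hS₀E : S₀ ∈ G.edgeFinset.powerset := by
    rw [Finset.mem_powerset]
    intro e he
    exact mem_edgeFinset.mpr (C.edges_subset_edgeSet (List.mem_toFinset.mp he))
  have hunsolv₀ : ¬ ∃ f : V → ZMod m, DPAux.Good S₀ c f := by
    rintro ⟨f, hf⟩
    have htel := DPAux.telescope f c hf C (fun e he => List.mem_toFinset.mpr he)
    rw [sub_self] at htel
    set zsum : ℤ := (C.darts.map fun d => cz d.fst d.snd).sum with hzs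
    have hcast : ((zsum : ℤ) : ZMod m) = 0 := by
      rw [hzs, Int.cast_list_sum, List.map_map]
      exact htel
    have hdvd := (ZMod.intCast_zmod_eq_zero_iff_dvd _ _).mp hcast
    have hbound := DPAux.sum_bound (V₁ := V₁) (Estar := Estar) C.darts
    rw [Walk.length_darts, hlen4] at hbound
    have hzero : zsum = 0 := by
      refine Int.eq_zero_of_abs_lt_dvd hdvd ?_
      have h4m : ((4 : ℕ) : ℤ) < (m : ℤ) := by
        exact_mod_cast lt_of_lt_of_le (by norm_num : (4:ℕ) < 5) hm5
      calc |zsum| ≤ ((4 : ℕ) : ℤ) := hbound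
        _ < (m : ℤ) := h4m
    obtain ⟨k, hk⟩ := DPAux.sum_parity (V₁ := V₁) (Estar := Estar) C.darts
    have hcnt : C.darts.countP (fun d => decide (d.edge ∈ Estar)) =
        C.edges.countP (fun e => decide (e ∈ Estar)) := by
      have hedges : C.edges = C.darts.map SimpleGraph.Dart.edge := rfl
      rw [hedges, List.countP_map]
      rfl
    rw [hcnt] at hk
    have hOddz : Odd zsum := by
      rw [hzs, hk]
      exact Odd.add_even ((Int.odd_coe_nat _).mpr hodd) ⟨k, (two_mul k)⟩
    rw [hzero] at hOddz
    simp [Int.odd_iff] at hOddz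
  have hS₀K : S₀ ∈ G.edgeFinset.powerset.filter
      (fun S => ¬ ∃ f : V → ZMod m, DPAux.Good S c f) :=
    Finset.mem_filter.mpr ⟨hS₀E, hunsolv₀⟩
  -- the component count of S₀
  have hstr₀ := DPAux.unsolvable_structure G S₀ (Finset.mem_powerset.mp hS₀E) c hanti htri
    hunsolv₀
  have hT : ∀ u v : V, s(u, v) ∈ S₀ → u ∈ C.support.tail.toFinset := by
    intro u v hs
    exact List.mem_toFinset.mpr (DPAux.mem_tail_of_edge C (List.mem_toFinset.mp hs))
  have hTcard : C.support.tail.toFinset.card = 4 := by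
    rw [List.toFinset_card_of_nodup hcyc.support_nodup, List.length_tail,
      Walk.length_support, hlen4]
  have hina : a ∈ C.support.tail.toFinset :=
    List.mem_toFinset.mpr (DPAux.end_mem_tail C (by rw [hlen4]; norm_num))
  have hge := DPAux.card_cc_ge S₀ _ a hina hT
  rw [hTcard] at hge
  have hcompeq :
      Nat.card (fromEdgeSet (S₀ : Set (Sym2 V))).ConnectedComponent + 3 = Fintype.card V := by
    have h1 := hstr₀.1
    exact le_antisymm h1 (Nat.succ_le_succ_iff.mp hge)
  -- the structure of all unsolvable sets
  have hstr : ∀ S ∈ G.edgeFinset.powerset.filter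
      (fun S => ¬ ∃ f : V → ZMod m, DPAux.Good S c f),
      Nat.card (fromEdgeSet (S : Set (Sym2 V))).ConnectedComponent + 3 ≤ Fintype.card V ∧
      (Nat.card (fromEdgeSet (S : Set (Sym2 V))).ConnectedComponent + 3 = Fintype.card V →
        S.card = 4) := by
    intro S hS
    rw [Finset.mem_filter] at hS
    exact DPAux.unsolvable_structure G S (Finset.mem_powerset.mp hS.1) c hanti htri hS.2
  have hlt := DPAux.main_estimate G c hanti hstr S₀ hS₀K hcompeq (by rw [← hq]; exact hm)
  calc PDP G m ≤ coverCount H := hPDP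
    _ = Nat.card {f : V → ZMod m // ∀ u v : V, G.Adj u v → f v ≠ f u + c u v} :=
        hcovercount
    _ < Nat.card {f : V → ZMod m // ∀ u v : V, G.Adj u v → f v ≠ f u} := hlt
    _ = properCount G m := hproper.symm
end

section
/- Let G be a graph, E* ⊆ E(G) with g_G(E*) = r₀. If C is a cycle of G with |V(C)| ≤ r₀ and |E(C) ∩ E*| odd, then |V(C)| = r₀ and C is an induced cycle of G. -/
open SimpleGraph

attribute [local instance] Classical.propDecidable

universe u
variable {V : Type u}

lemma List.odd_countP_cons_or_of_odd_countP_append {α : Type*} (p : α → Bool) (x : α)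
    {l₁ l₂ : List α} (h : Odd ((l₁ ++ l₂).countP p)) :
    Odd ((x :: l₁).countP p) ∨ Odd ((x :: l₂).countP p) := by
  simp only [List.countP_cons, List.countP_append, Nat.odd_iff] at h ⊢
  split <;> omega

namespace SimpleGraph.Walk

variable [DecidableEq V] {G : SimpleGraph V} {a u v : V}

lemma IsCycle.isPath_dropUntil {c : G.Walk u u} (hc : c.IsCycle) (hv : v ∈ c.support)
    (hvu : v ≠ u) : (c.dropUntil v hv).IsPath :=
  IsCycle.isPath_of_append_right (p := c.takeUntil v hv) (not_nil_of_ne hvu.symm)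
    (by rwa [take_spec])

lemma IsCycle.isCycle_cons_dropUntil {c : G.Walk u u} (hc : c.IsCycle) (hv : v ∈ c.support)
    (h : G.Adj u v) (he : s(u, v) ∉ c.edges) : (cons h (c.dropUntil v hv)).IsCycle :=
  (cons_isCycle_iff _ h).mpr
    ⟨hc.isPath_dropUntil hv h.ne.symm, fun h' ↦ he (c.edges_dropUntil_subset_edges hv h')⟩

lemma IsCycle.isCycle_cons_reverse_takeUntil {c : G.Walk u u} (hc : c.IsCycle)
    (hv : v ∈ c.support) (h : G.Adj u v) (he : s(u, v) ∉ c.edges) :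
    (cons h (c.takeUntil v hv).reverse).IsCycle :=
  (cons_isCycle_iff _ h).mpr ⟨(hc.isPath_takeUntil hv).reverse, by
    rw [edges_reverse, List.mem_reverse]
    exact fun h' ↦ he (c.edges_takeUntil_subset_edges hv h')⟩

/-- The chord `uv` cuts `c` into two shorter cycles whose `P`-counts add up to that of `c`
plus twice `P s(u, v)`, so one of them is odd. -/
lemma IsCycle.exists_shorter_odd_of_chord_from_start {c : G.Walk u u} (hc : c.IsCycle)
    (hv : v ∈ c.support) (h : G.Adj u v) (he : s(u, v) ∉ c.edges) (P : Sym2 V → Bool)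
    (hodd : Odd (c.edges.countP P)) :
    ∃ d : G.Walk u u, d.IsCycle ∧ d.length < c.length ∧ Odd (d.edges.countP P) := by
  have hq := hc.isCycle_cons_reverse_takeUntil hv h he
  have hr := hc.isCycle_cons_dropUntil hv h he
  have hlen : (c.takeUntil v hv).length + (c.dropUntil v hv).length = c.length := by
    rw [← length_append, take_spec]
  have hq3 := hq.three_le_length
  have hr3 := hr.three_le_length
  simp only [length_cons, length_reverse] at hq3 hr3
  rw [← c.take_spec hv, edges_append] at hodd
  rcases List.odd_countP_cons_or_of_odd_countP_append P s(u, v) hodd with hodd' | hodd'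
  · refine ⟨_, hq, by simp only [length_cons, length_reverse]; omega, ?_⟩
    rwa [edges_cons, edges_reverse, List.countP_cons, List.countP_reverse, ← List.countP_cons]
  · exact ⟨_, hr, by simp only [length_cons]; omega, hodd'⟩

lemma IsCycle.exists_shorter_odd_of_chord {p : G.Walk a a} (hp : p.IsCycle)
    (hu : u ∈ p.support) (hv : v ∈ p.support) (h : G.Adj u v) (he : s(u, v) ∉ p.edges)
    (P : Sym2 V → Bool) (hodd : Odd (p.edges.countP P)) :
    ∃ (b : V) (d : G.Walk b b), d.IsCycle ∧ d.length < p.length ∧ Odd (d.edges.countP P) := by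
  have hrot := p.rotate_edges u hu
  obtain ⟨d, hd, hlt, hdodd⟩ := (hp.rotate hu).exists_shorter_odd_of_chord_from_start
    ((p.mem_support_rotate_iff u hu).mpr hv) h (fun h' ↦ he (hrot.perm.mem_iff.mp h')) P
    (hrot.perm.countP_eq P ▸ hodd)
  exact ⟨u, d, hd, p.length_rotate u hu ▸ hlt, hdodd⟩

end SimpleGraph.Walk

lemma setGirth_le_length {G : SimpleGraph V} {E₀ : Set (Sym2 V)} {a : V}
    {p : G.Walk a a} (hp : p.IsCycle) (hodd : Odd (p.edges.countP (fun e => e ∈ E₀))) :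
    setGirth G E₀ ≤ p.length :=
  iInf_le_of_le a (iInf_le_of_le p (iInf_le_of_le hp (iInf_le _ hodd)))

theorem short_odd_cycle_is_induced_general {V : Type}
    (G : SimpleGraph V) (Estar : Set (Sym2 V))
    (r₀ : ℕ) (hr : setGirth G Estar = (r₀ : ℕ∞))
    (a : V) (p : G.Walk a a) (hp : p.IsCycle) (hlen : p.length ≤ r₀)
    (hodd : Odd (p.edges.countP (fun e => e ∈ Estar))) :
    p.length = r₀ ∧
    ∀ u v : V, u ∈ p.support → v ∈ p.support → G.Adj u v → s(u, v) ∈ p.edges := by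
  have hmin : ∀ (b : V) (d : G.Walk b b), d.IsCycle →
      Odd (d.edges.countP (fun e => e ∈ Estar)) → r₀ ≤ d.length := fun _ _ hd hdodd ↦ by
    exact_mod_cast hr ▸ setGirth_le_length hd hdodd
  refine ⟨le_antisymm hlen (hmin a p hp hodd), fun u v hu hv h ↦ ?_⟩
  by_contra he
  obtain ⟨b, d, hd, hlt, hdodd⟩ := hp.exists_shorter_odd_of_chord hu hv h he _ hodd
  have := hmin b d hd hdodd
  omega

/-- a cycle of length at most `r₀ = g_G(E*)` meeting `E*` in an odd
number of edges has length exactly `r₀` and is induced. -/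
theorem short_odd_cycle_is_induced {V : Type} [DecidableEq V]
    (G : SimpleGraph V) (Estar : Set (Sym2 V))
    (r₀ : ℕ) (hr : setGirth G Estar = (r₀ : ℕ∞))
    (a : V) (p : G.Walk a a) (hp : p.IsCycle) (hlen : p.length ≤ r₀)
    (hodd : Odd (p.edges.countP (fun e => e ∈ Estar))) :
    p.length = r₀ ∧
    ∀ u v : V, u ∈ p.support → v ∈ p.support → G.Adj u v → s(u, v) ∈ p.edges :=
  short_odd_cycle_is_induced_general G Estar r₀ hr a p hp hlen hodd
end

section
/- Let G be a graph on n vertices with E* = {e₁,…,e_k} ⊆ E(G), k ≥ 1, where e_i = u_i v_i. Let ℋ=(L,H) be the m-fold cover with L(x)={(x,i): i∈[m]}, E_H(L(x),L(y))={(x,i)(y,i): i∈[m]} for edges xy ∉ E*, and E_H(L(u_i),L(v_i))={(u_i,q)(v_i,q+1 mod m): q∈[m]} for each e_i ∈ E*. If m > k, then for any cycle C of G with |E(C) ∩ E*| odd, no transversal of {L(v): v ∈ V(C)} induces a copy of C in H. -/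
open SimpleGraph

attribute [local instance] Classical.propDecidable

universe u
variable {V : Type u}

/-! Proof idea: if a transversal `f` induces a copy of the cycle, then across every edge outside
`E*` the fibre index stays put, and across an edge of `E*` it moves by `±1`, the sign given by the
orientation `D`. Summing these shifts around the cycle gives an integer `S` with `m ∣ S`
(it telescopes to `0` in `ZMod m`). But `|S|` is at most the number `t ≤ k < m` of edges of `E*`
on the cycle, and `S ≡ t ≡ 1 (mod 2)`, so `S ≠ 0`: a contradiction. -/

theorem SimpleGraph.Walk.sum_darts_sub {W A : Type*} [AddCommGroup A] {G : SimpleGraph W}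
    (g : W → A) {x y : W} (w : G.Walk x y) :
    (w.darts.map fun d => g d.snd - g d.fst).sum = g y - g x := by
  induction w with
  | nil => simp
  | cons _ _ ih => simp [ih]

theorem List.Nodup.countP_mem_le_ncard {α : Type*} {l : List α} (hl : l.Nodup) (s : Set α)
    [Finite s] : l.countP (· ∈ s) ≤ s.ncard := by
  rw [← hl.card_eq_countP, ← Set.ncard_coe_finset]
  exact Set.ncard_le_ncard (fun x hx => (by simpa using hx : x ∈ l ∧ x ∈ s).2)

namespace List

variable {l : List ℤ}

theorem natAbs_sum_le_countP_ne_zero (hl : ∀ x ∈ l, x.natAbs ≤ 1) :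
    l.sum.natAbs ≤ l.countP (· ≠ 0) := by
  induction l with
  | nil => simp
  | cons x l ih =>
    have ih := ih fun y hy => hl y (mem_cons_of_mem x hy)
    rw [sum_cons, countP_cons]
    by_cases hx : x = 0
    · simpa [hx] using ih
    · have := hl x mem_cons_self
      rw [if_pos (decide_eq_true hx)]
      omega

theorem intCast_sum_zmod_two (hl : ∀ x ∈ l, x.natAbs ≤ 1) :
    (l.sum : ZMod 2) = l.countP (· ≠ 0) := by
  induction l with
  | nil => simp
  | cons x l ih =>
    have hx : x = -1 ∨ x = 0 ∨ x = 1 := by have := hl x mem_cons_self; omega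
    rw [sum_cons, countP_cons, Int.cast_add, ih fun y hy => hl y (mem_cons_of_mem x hy)]
    rcases hx with rfl | rfl | rfl <;> simp [add_comm]

theorem not_dvd_sum_of_odd_countP_ne_zero {m : ℕ} (hl : ∀ x ∈ l, x.natAbs ≤ 1)
    (hodd : Odd (l.countP (· ≠ 0))) (hm : l.countP (· ≠ 0) < m) : ¬ (m : ℤ) ∣ l.sum := by
  intro hdvd
  have hsum : l.sum ≠ 0 := by
    intro h
    have := intCast_sum_zmod_two hl
    rw [h, Int.cast_zero, eq_comm, ZMod.natCast_eq_zero_iff_even] at this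
    exact Nat.not_even_iff_odd.mpr hodd this
  exact hsum <| Int.eq_zero_of_dvd_of_natAbs_lt_natAbs hdvd
    ((natAbs_sum_le_countP_ne_zero hl).trans_lt hm)

end List

section ShiftCover

variable {G : SimpleGraph V} {E₀ : Set (Sym2 V)} {D : Set (V × V)}

noncomputable def orientationSign (D : Set (V × V)) (x y : V) : ℤ :=
  if (x, y) ∈ D then 1 else if (y, x) ∈ D then -1 else 0

theorem natAbs_orientationSign_le_one (D : Set (V × V)) (x y : V) :
    (orientationSign D x y).natAbs ≤ 1 := by
  unfold orientationSign
  split_ifs <;> simp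

theorem IsOrientation.orientationSign_ne_zero_iff (hD : IsOrientation D E₀) {x y : V} :
    orientationSign D x y ≠ 0 ↔ s(x, y) ∈ E₀ := by
  unfold orientationSign
  constructor
  · intro h
    split_ifs at h with hxy hyx
    · exact hD.1 _ hxy
    · exact Sym2.eq_swap ▸ hD.1 _ hyx
    · exact absurd rfl h
  · intro h
    have := hD.2 x y h
    split_ifs <;> simp_all

theorem IsOrientation.countP_orientationSign_ne_zero (hD : IsOrientation D E₀) {u v : V}
    (p : G.Walk u v) :
    (p.darts.map fun d => orientationSign D d.fst d.snd).countP (· ≠ 0) =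
      p.edges.countP (· ∈ E₀) := by
  rw [p.edges_eq_map_darts, List.countP_map, List.countP_map]
  refine List.countP_congr fun d _ => ?_
  simp only [Function.comp_apply, decide_eq_true_eq]
  exact hD.orientationSign_ne_zero_iff

/-- The paper's cover with `L(x) = {x} × Fin m`: over an edge of `E₀` oriented as `(x, y) ∈ D`
the matching sends `(x, q)` to `(y, q + 1)`. -/
def IsShiftCover (G : SimpleGraph V) (E₀ : Set (Sym2 V)) (D : Set (V × V)) {m : ℕ} [NeZero m]
    (H : SimpleGraph (V × Fin m)) : Prop :=
  ∀ (x y : V) (i j : Fin m), H.Adj (x, i) (y, j) ↔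
    ((x = y ∧ i ≠ j) ∨ (G.Adj x y ∧ s(x, y) ∉ E₀ ∧ i = j) ∨
      ((x, y) ∈ D ∧ j = i + 1) ∨ ((y, x) ∈ D ∧ i = j + 1))

variable {m : ℕ} [NeZero m] {H : SimpleGraph (V × Fin m)}

/-- Fibre indices are compared in `ZMod m`, where the shifts telescope. -/
theorem IsShiftCover.sub_eq_orientationSign (hH : IsShiftCover G E₀ D H)
    (hD : IsOrientation D E₀) {x y : V} (hxy : x ≠ y) {i j : Fin m}
    (hadj : H.Adj (x, i) (y, j)) :
    ZMod.finEquiv m j - ZMod.finEquiv m i = orientationSign D x y := by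
  have hxy_mem : (x, y) ∈ D → s(x, y) ∈ E₀ := hD.1 _
  have hyx_mem : (y, x) ∈ D → s(x, y) ∈ E₀ := fun h => Sym2.eq_swap ▸ hD.1 _ h
  unfold orientationSign
  rcases (hH x y i j).1 hadj with ⟨rfl, -⟩ | ⟨-, hE, rfl⟩ | ⟨hD', rfl⟩ | ⟨hD', rfl⟩
  · exact absurd rfl hxy
  · rw [if_neg (mt hxy_mem hE), if_neg (mt hyx_mem hE)]
    simp
  · rw [if_pos hD']
    simp
  · rw [if_neg ((hD.2 y x (hD.1 _ hD')).1 hD')]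
    simp [if_pos hD']

theorem IsShiftCover.dvd_sum_orientationSign (hH : IsShiftCover G E₀ D H)
    (hD : IsOrientation D E₀) (f : V → Fin m) {a : V} (p : G.Walk a a)
    (hf : ∀ d ∈ p.darts, H.Adj (d.fst, f d.fst) (d.snd, f d.snd)) :
    (m : ℤ) ∣ (p.darts.map fun d => orientationSign D d.fst d.snd).sum := by
  rw [← ZMod.intCast_zmod_eq_zero_iff_dvd, Int.cast_list_sum, List.map_map, Function.comp_def]
  have hshift : ∀ d ∈ p.darts, ((orientationSign D d.fst d.snd : ℤ) : ZMod m) =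
      ZMod.finEquiv m (f d.snd) - ZMod.finEquiv m (f d.fst) := fun d hd =>
    (hH.sub_eq_orientationSign hD d.adj.ne (hf d hd)).symm
  rw [List.map_congr_left hshift, p.sum_darts_sub (fun v => ZMod.finEquiv m (f v)), sub_self]

end ShiftCover

theorem no_copy_of_odd_cycle_in_shift_cover_general {V : Type} [Fintype V]
    (G : SimpleGraph V) (m : ℕ) [NeZero m]
    (Estar : Set (Sym2 V))
    (D : Set (V × V)) (hD : IsOrientation D Estar)
    (k : ℕ) (hk : Nat.card ↥Estar = k) (hm : k < m)
    (H : SimpleGraph (V × Fin m))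
    (hH : ∀ (x y : V) (i j : Fin m), H.Adj (x, i) (y, j) ↔
      ((x = y ∧ i ≠ j) ∨ (G.Adj x y ∧ s(x, y) ∉ Estar ∧ i = j) ∨
       ((x, y) ∈ D ∧ j = i + 1) ∨ ((y, x) ∈ D ∧ i = j + 1)))
    (a : V) (p : G.Walk a a) (hp : p.IsCycle)
    (hodd : Odd (p.edges.countP (fun e => e ∈ Estar))) :
    ¬ ∃ f : V → Fin m, ∀ u v : V, s(u, v) ∈ p.edges → H.Adj (u, f u) (v, f v) := by
  rintro ⟨f, hf⟩
  have hcount := hD.countP_orientationSign_ne_zero p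
  have hle : p.edges.countP (· ∈ Estar) ≤ k :=
    hk ▸ Nat.card_coe_set_eq Estar ▸ List.Nodup.countP_mem_le_ncard hp.edges_nodup Estar
  have hdvd := IsShiftCover.dvd_sum_orientationSign hH hD f p fun d hd =>
    hf _ _ (p.edges_eq_map_darts ▸ List.mem_map_of_mem hd)
  exact List.not_dvd_sum_of_odd_countP_ne_zero
    (List.forall_mem_map.2 fun _ _ => natAbs_orientationSign_le_one ..)
    (hcount ▸ hodd) (hcount ▸ hle.trans_lt hm) hdvd

/-- in the shifted cover, when `m > k = |E*|`, no transversal induces a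
copy of a cycle meeting `E*` in an odd number of edges. -/
theorem no_copy_of_odd_cycle_in_shift_cover {V : Type} [Fintype V] [DecidableEq V]
    (G : SimpleGraph V) (m : ℕ) [NeZero m]
    (Estar : Set (Sym2 V)) (hE : Estar ⊆ G.edgeSet)
    (D : Set (V × V)) (hD : IsOrientation D Estar)
    (k : ℕ) (hk : Nat.card ↥Estar = k) (hm : k < m)
    (H : SimpleGraph (V × Fin m))
    (hH : ∀ (x y : V) (i j : Fin m), H.Adj (x, i) (y, j) ↔
      ((x = y ∧ i ≠ j) ∨ (G.Adj x y ∧ s(x, y) ∉ Estar ∧ i = j) ∨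
       ((x, y) ∈ D ∧ j = i + 1) ∨ ((y, x) ∈ D ∧ i = j + 1)))
    (a : V) (p : G.Walk a a) (hp : p.IsCycle)
    (hodd : Odd (p.edges.countP (fun e => e ∈ Estar))) :
    ¬ ∃ f : V → Fin m, ∀ u v : V, s(u, v) ∈ p.edges → H.Adj (u, f u) (v, f v) :=
  no_copy_of_odd_cycle_in_shift_cover_general G m Estar D hD k hk hm H hH a p hp hodd
end
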